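/- arXiv:1707.07365 — 6 statements merged into one kernel-verified Lean document; each statement's English description precedes it below -/
import Mathlib

section
/- A simple 3-polytope P is flag if and only if P is not the 3-simplex and P does not contain a 3-belt of facets. -/
/-- An abstract simplicial complex on vertex type `V` (with the empty face included). -/
structure SC (V : Type) where
  faces : Set (Finset V)
  empty_mem : ∅ ∈ faces
  down_closed : ∀ s ∈ faces, ∀ t ⊆ s, t ∈ faces

variable {V : Type}
section Sphere
variable [DecidableEq V]

/-- The degree of a vertex: the number of vertices adjacent to it. Dually, the number
of edges of the facet of the simple 3-polytope corresponding to `v`. -/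
noncomputable def SC.vdeg (K : SC V) (v : V) : ℕ :=
  Set.ncard {u | u ≠ v ∧ ({v, u} : Finset V) ∈ K.faces}

/-- `K` is a simplicial 2-sphere: pure 2-dimensional, every vertex present, each edge in
exactly two triangles, vertex links connected, connected, and Euler characteristic 2.
Dually, the boundary complex of a simple 3-polytope. -/
def IsSphere2 [Fintype V] (K : SC V) : Prop :=
  (∀ v : V, ({v} : Finset V) ∈ K.faces) ∧
  (∀ s ∈ K.faces, s.card ≤ 3) ∧
  (∀ s ∈ K.faces, ∃ t ∈ K.faces, s ⊆ t ∧ t.card = 3) ∧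
  (∀ e ∈ K.faces, e.card = 2 → Set.ncard {t | t ∈ K.faces ∧ t.card = 3 ∧ e ⊆ t} = 2) ∧
  (∀ (v : V) (t t' : Finset V), t ∈ K.faces → t' ∈ K.faces → t.card = 3 → t'.card = 3 →
    v ∈ t → v ∈ t' →
    Relation.ReflTransGen
      (fun a b => a ∈ K.faces ∧ b ∈ K.faces ∧ a.card = 3 ∧ b.card = 3 ∧
        v ∈ a ∧ v ∈ b ∧ (a ∩ b).card = 2) t t') ∧
  (∀ u w : V, Relation.ReflTransGen (fun a b => a ≠ b ∧ ({a, b} : Finset V) ∈ K.faces) u w) ∧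
  ((Set.ncard {s | s ∈ K.faces ∧ s.card = 1} : ℤ)
    - (Set.ncard {s | s ∈ K.faces ∧ s.card = 2} : ℤ)
    + (Set.ncard {s | s ∈ K.faces ∧ s.card = 3} : ℤ) = 2)

/-- `K` is flag: every nonempty collection of pairwise adjacent vertices spans a face.
Dually: every family of pairwise intersecting facets of `P` has a common point. -/
def IsFlag (K : SC V) : Prop :=
  ∀ s : Finset V, s.Nonempty → (∀ u ∈ s, ({u} : Finset V) ∈ K.faces) →
    (∀ u ∈ s, ∀ w ∈ s, u ≠ w → ({u, w} : Finset V) ∈ K.faces) → s ∈ K.faces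

/-- A `k`-belt, dually: a chordless cycle `f 0, f 1, …, f (k-1)` in `K` spanning no
2-simplex.  The corresponding facets are pairwise distinct and only consecutive ones
(in the cyclic order) intersect. -/
def IsBelt (K : SC V) (k : ℕ) (f : ZMod k → V) : Prop :=
  3 ≤ k ∧ Function.Injective f ∧
  (∀ i : ZMod k, ({f i, f (i + 1)} : Finset V) ∈ K.faces) ∧
  (∀ i j : ZMod k, i ≠ j → ({f i, f j} : Finset V) ∈ K.faces → (j = i + 1 ∨ i = j + 1)) ∧
  (∀ i j l : ZMod k, i ≠ j → j ≠ l → i ≠ l → ({f i, f j, f l} : Finset V) ∉ K.faces)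

/-- `P` has a `k`-belt of facets. -/
def HasBelt (K : SC V) (k : ℕ) : Prop := ∃ f : ZMod k → V, IsBelt K k f

/-- `K` is the boundary of the 3-simplex (dually, `P = Δ³`). -/
def IsSimplexBoundary (K : SC V) : Prop :=
  ∃ s : Finset V, s.card = 4 ∧ K.faces = {t | t ⊆ s ∧ t ≠ s}

/-- A Pogorelov polytope: a (simple 3-dimensional) flag polytope without 4-belts,
encoded via its dual simplicial 2-sphere. -/
def IsPogorelov (K : SC V) : Prop := IsFlag K ∧ ¬ HasBelt K 4

/-- The facet corresponding to `v`, having `K.vdeg v` edges, is surrounded by a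
`(K.vdeg v)`-belt consisting exactly of the facets adjacent to it. -/
def VertexSurrounded (K : SC V) (v : V) : Prop :=
  ∃ f : ZMod (K.vdeg v) → V, IsBelt K (K.vdeg v) f ∧
    Set.range f = {u | u ≠ v ∧ ({v, u} : Finset V) ∈ K.faces}

/-- Every 3-cycle of `K` bounds a face (no empty triangles). -/
def NoEmptyTriangle (K : SC V) : Prop :=
  ∀ a b c : V, a ≠ b → b ≠ c → a ≠ c →
    ({a, b} : Finset V) ∈ K.faces → ({b, c} : Finset V) ∈ K.faces →
    ({a, c} : Finset V) ∈ K.faces → ({a, b, c} : Finset V) ∈ K.faces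

/-- `K` contains a chordless 4-cycle. -/
def HasChordless4 (K : SC V) : Prop :=
  ∃ f : ZMod 4 → V, Function.Injective f ∧
    (∀ i : ZMod 4, ({f i, f (i + 1)} : Finset V) ∈ K.faces) ∧
    ({f 0, f 2} : Finset V) ∉ K.faces ∧ ({f 1, f 3} : Finset V) ∉ K.faces

end Sphere

/-! A triple of pairwise adjacent vertices that spans no triangle is precisely a 3-belt, so without
3-belts every clique of at most three vertices is a face. A 4-clique `S`, on the other hand, is
all of `K`: its four triangles are faces, each edge of `S` lies in exactly two triangles, both in
`S`, so by connectivity of the vertex links no triangle leaves `S`, and by connectivity of `K`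
no vertex does. -/

section Cliques
variable [DecidableEq V] {K : SC V}

def SC.IsClique (K : SC V) (s : Finset V) : Prop :=
  (s : Set V).Pairwise fun u w => ({u, w} : Finset V) ∈ K.faces

theorem SC.IsClique.subset {s t : Finset V} (hs : K.IsClique s) (hts : t ⊆ s) : K.IsClique t :=
  Set.Pairwise.mono (Finset.coe_subset.2 hts) hs

theorem noEmptyTriangle_iff_not_hasBelt_three : NoEmptyTriangle K ↔ ¬ HasBelt K 3 := by
  constructor
  · rintro hT ⟨f, -, hf, hedge, -, hface⟩
    have hne : ∀ i j : ZMod 3, i ≠ j → f i ≠ f j := fun i j hij h => hij (hf h)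
    have h₂₀ := hedge 2
    rw [Finset.pair_comm] at h₂₀
    exact hface 0 1 2 (by decide) (by decide) (by decide) <|
      hT _ _ _ (hne 0 1 (by decide)) (hne 1 2 (by decide)) (hne 0 2 (by decide)) (hedge 0)
        (hedge 1) h₂₀
  · intro hB a b c hab hbc hac h₁ h₂ h₃
    by_contra habc
    have hcyc : ∀ i j : ZMod 3, i ≠ j → j = i + 1 ∨ i = j + 1 := by decide
    refine hB ⟨![a, b, c], le_rfl, ?_, ?_, fun i j hij _ => hcyc i j hij, ?_⟩
    · intro i j h
      fin_cases i <;> fin_cases j <;> first | rfl | simp_all [eq_comm]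
    · intro i
      fin_cases i
      · exact h₁
      · exact h₂
      · rw [Finset.pair_comm]; exact h₃
    · intro i j l hij hjl hil
      fin_cases i <;> fin_cases j <;> fin_cases l <;>
        first
        | exact absurd rfl hij
        | exact absurd rfl hjl
        | exact absurd rfl hil
        | (convert habc using 2; ext; simp only [Finset.mem_insert, Finset.mem_singleton]; tauto)

theorem NoEmptyTriangle.mem_faces_of_card_le_three (hT : NoEmptyTriangle K) {s : Finset V}
    (hv : ∀ u ∈ s, ({u} : Finset V) ∈ K.faces) (hs : K.IsClique s) (h3 : s.card ≤ 3) :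
    s ∈ K.faces := by
  interval_cases h : s.card
  · rw [Finset.card_eq_zero.1 h]; exact K.empty_mem
  · obtain ⟨a, rfl⟩ := Finset.card_eq_one.1 h
    exact hv a (Finset.mem_singleton_self a)
  · obtain ⟨a, b, hab, rfl⟩ := Finset.card_eq_two.1 h
    exact hs (by simp) (by simp) hab
  · obtain ⟨a, b, c, hab, hac, hbc, rfl⟩ := Finset.card_eq_three.1 h
    exact hT a b c hab hbc hac (hs (by simp) (by simp) hab) (hs (by simp) (by simp) hbc)
      (hs (by simp) (by simp) hac)

theorem IsFlag.noEmptyTriangle (hF : IsFlag K) : NoEmptyTriangle K := by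
  intro a b c hab hbc hac h₁ h₂ h₃
  refine hF _ (Finset.insert_nonempty _ _) (fun u hu => ?_) (fun u hu w hw huw => ?_)
  · simp only [Finset.mem_insert, Finset.mem_singleton] at hu
    rcases hu with rfl | rfl | rfl
    · exact K.down_closed _ h₁ _ (by simp)
    · exact K.down_closed _ h₂ _ (by simp)
    · exact K.down_closed _ h₂ _ (by simp)
  · simp only [Finset.mem_insert, Finset.mem_singleton] at hu hw
    rcases hu with rfl | rfl | rfl <;> rcases hw with rfl | rfl | rfl <;>
      simp_all [Finset.pair_comm]

theorem IsFlag.not_isSimplexBoundary (hF : IsFlag K) : ¬ IsSimplexBoundary K := by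
  rintro ⟨s, hs4, hK⟩
  have hsmall : ∀ t ⊆ s, t.card < 4 → t ∈ K.faces := fun t hts ht4 => by
    rw [hK]
    exact ⟨hts, by rintro rfl; omega⟩
  have hs : s ∈ K.faces :=
    hF s (Finset.card_pos.1 (by omega))
      (fun u hu => hsmall _ (Finset.singleton_subset_iff.2 hu) (by simp))
      (fun u hu w hw huw => hsmall _ (Finset.insert_subset hu (Finset.singleton_subset_iff.2 hw))
        (by rw [Finset.card_pair huw]; omega))
  rw [hK] at hs
  exact hs.2 rfl

end Cliques

namespace IsSphere2
variable [DecidableEq V] [Fintype V] {K : SC V}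

theorem eq_or_eq_of_edge_subset (hK : IsSphere2 K) {e t₁ t₂ t : Finset V} (he : e ∈ K.faces)
    (he2 : e.card = 2) (ht₁ : t₁ ∈ K.faces ∧ t₁.card = 3 ∧ e ⊆ t₁)
    (ht₂ : t₂ ∈ K.faces ∧ t₂.card = 3 ∧ e ⊆ t₂) (ht : t ∈ K.faces ∧ t.card = 3 ∧ e ⊆ t)
    (h₁₂ : t₁ ≠ t₂) : t = t₁ ∨ t = t₂ := by
  obtain ⟨-, -, -, htwo, -⟩ := hK
  obtain ⟨x, y, -, hxy⟩ := Set.ncard_eq_two.1 (htwo e he he2)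
  have h₁ : t₁ ∈ ({x, y} : Set (Finset V)) := hxy ▸ ht₁
  have h₂ : t₂ ∈ ({x, y} : Set (Finset V)) := hxy ▸ ht₂
  have h : t ∈ ({x, y} : Set (Finset V)) := hxy ▸ ht
  simp only [Set.mem_insert_iff, Set.mem_singleton_iff] at h₁ h₂ h
  grind

variable {S : Finset V}

theorem mem_faces_of_subset_isClique (hK : IsSphere2 K) (hT : NoEmptyTriangle K)
    (hSK : K.IsClique S) {t : Finset V} (htS : t ⊆ S) (ht3 : t.card ≤ 3) : t ∈ K.faces :=
  hT.mem_faces_of_card_le_three (fun v _ => hK.1 v) (hSK.subset htS) ht3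

-- The two triangles of `S` through `e` already use up both triangles of `K` on the edge `e`.
theorem subset_of_edge_subset (hK : IsSphere2 K) (hT : NoEmptyTriangle K) (hS4 : S.card = 4)
    (hSK : K.IsClique S) {e t : Finset V} (heS : e ⊆ S) (he2 : e.card = 2) (ht : t ∈ K.faces)
    (ht3 : t.card = 3) (het : e ⊆ t) : t ⊆ S := by
  have hSe : (S \ e).card = 2 := by rw [Finset.card_sdiff_of_subset heS, hS4, he2]
  obtain ⟨p, q, hpq, hpqS⟩ := Finset.card_eq_two.1 hSe
  have hp : p ∈ S \ e := by rw [hpqS]; simp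
  have hq : q ∈ S \ e := by rw [hpqS]; simp
  have htri : ∀ r ∈ S \ e, insert r e ∈ K.faces ∧ (insert r e).card = 3 ∧ e ⊆ insert r e := by
    intro r hr
    have hcard : (insert r e).card = 3 := by
      rw [Finset.card_insert_of_notMem (Finset.mem_sdiff.1 hr).2, he2]
    exact ⟨hK.mem_faces_of_subset_isClique hT hSK
      (Finset.insert_subset (Finset.mem_sdiff.1 hr).1 heS) hcard.le, hcard, Finset.subset_insert _ _⟩
  have hne : insert p e ≠ insert q e := by
    intro h
    have : p ∈ insert q e := h ▸ Finset.mem_insert_self p e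
    simp [hpq, (Finset.mem_sdiff.1 hp).2] at this
  rcases hK.eq_or_eq_of_edge_subset (hK.mem_faces_of_subset_isClique hT hSK heS (by omega)) he2
    (htri p hp) (htri q hq) ⟨ht, ht3, het⟩ hne with rfl | rfl
  · exact Finset.insert_subset (Finset.mem_sdiff.1 hp).1 heS
  · exact Finset.insert_subset (Finset.mem_sdiff.1 hq).1 heS

-- Walk around `x` from a triangle of `S`: consecutive triangles share an edge, which lies in `S`.
theorem subset_of_mem (hK : IsSphere2 K) (hT : NoEmptyTriangle K) (hS4 : S.card = 4)
    (hSK : K.IsClique S) {x : V} {t : Finset V} (hxS : x ∈ S) (ht : t ∈ K.faces)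
    (ht3 : t.card = 3) (hxt : x ∈ t) : t ⊆ S := by
  obtain ⟨w, hwS, hwx⟩ := Finset.exists_mem_ne (by omega : 1 < S.card) x
  have h₀3 : (S.erase w).card = 3 := by rw [Finset.card_erase_of_mem hwS, hS4]
  have h₀ : S.erase w ∈ K.faces :=
    hK.mem_faces_of_subset_isClique hT hSK (Finset.erase_subset w S) h₀3.le
  obtain ⟨-, -, -, -, hlink, -⟩ := id hK
  have hchain := hlink x _ t h₀ ht h₀3 ht3 (Finset.mem_erase.2 ⟨hwx.symm, hxS⟩) hxt
  clear ht ht3 hxt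
  induction hchain with
  | refl => exact Finset.erase_subset w S
  | tail _ hab ih =>
    obtain ⟨-, hb, -, hb3, -, -, hab2⟩ := hab
    exact hK.subset_of_edge_subset hT hS4 hSK (Finset.inter_subset_left.trans ih) hab2 hb hb3
      Finset.inter_subset_right

theorem mem_of_isClique (hK : IsSphere2 K) (hT : NoEmptyTriangle K) (hS4 : S.card = 4)
    (hSK : K.IsClique S) (v : V) : v ∈ S := by
  obtain ⟨-, -, hpure, -, -, hconn, -⟩ := id hK
  obtain ⟨x, hxS⟩ := Finset.card_pos.1 (by omega : 0 < S.card)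
  induction hconn x v with
  | refl => exact hxS
  | tail _ huw ih =>
    obtain ⟨t, ht, hut, ht3⟩ := hpure _ huw.2
    exact hK.subset_of_mem hT hS4 hSK ih ht ht3 (hut (by simp)) (hut (by simp))

theorem isSimplexBoundary_of_isClique (hK : IsSphere2 K) (hT : NoEmptyTriangle K)
    (hS4 : S.card = 4) (hSK : K.IsClique S) : IsSimplexBoundary K := by
  refine ⟨S, hS4, Set.ext fun t => ⟨fun ht => ⟨fun v _ => hK.mem_of_isClique hT hS4 hSK v, ?_⟩,
    fun ⟨htS, hne⟩ => hK.mem_faces_of_subset_isClique hT hSK htS ?_⟩⟩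
  · rintro rfl
    have := hK.2.1 _ ht
    omega
  · have := Finset.card_lt_card (Finset.ssubset_iff_subset_ne.2 ⟨htS, hne⟩)
    omega

end IsSphere2

/-- A simple 3-polytope `P` (encoded by its dual simplicial 2-sphere `K`) is flag
if and only if `P ≠ Δ³` and `P` has no 3-belt of facets. -/
theorem stmt4 {V : Type} [DecidableEq V] [Fintype V] (K : SC V) (hS : IsSphere2 K) :
    IsFlag K ↔ (¬ IsSimplexBoundary K ∧ ¬ HasBelt K 3) := by
  rw [← noEmptyTriangle_iff_not_hasBelt_three]
  refine ⟨fun hF => ⟨hF.not_isSimplexBoundary, hF.noEmptyTriangle⟩, ?_⟩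
  rintro ⟨hB, hT⟩ s - hv hs
  by_cases h3 : s.card ≤ 3
  · exact hT.mem_faces_of_card_le_three hv hs h3
  · obtain ⟨S, hSs, hS4⟩ := Finset.exists_subset_card_eq (show 4 ≤ s.card by omega)
    exact absurd (hS.isSimplexBoundary_of_isClique hT hS4 (SC.IsClique.subset hs hSs)) hB
end

section
/- A simple 3-polytope P is flag if and only if every facet of P is surrounded by a k-belt, where k is the number of edges of that facet. -/
variable {V : Type}
/-!
In a simplicial 2-sphere the link of a vertex `v` is a cycle through the neighbours of `v`:
every edge `{v, u}` lies in exactly two triangles, so each neighbour has two neighbours in the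
link, and the link is connected. Flagness makes this cycle chordless and free of triangles of
`K`, i.e. a belt. Conversely, if every link is a belt, two adjacent neighbours `b, c` of `a`
are consecutive on the belt around `a`; the two triangles through `{a, b}` then have their third
vertices on either side of `b`, so `{a, b, c}` is a triangle. A 4-clique is impossible, as it
would put a triangle inside a belt, and hence every clique is a face.
-/

lemma Finset.exists_eq_triple_of_pair_subset {α : Type*} [DecidableEq α] {t : Finset α}
    {x y : α} (ht : t.card = 3) (hxy : x ≠ y) (hsub : {x, y} ⊆ t) :
    ∃ z, z ≠ x ∧ z ≠ y ∧ t = {x, y, z} := by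
  obtain ⟨z, hz⟩ : ∃ z, t \ {x, y} = {z} := Finset.card_eq_one.1 <| by
    rw [Finset.card_sdiff_of_subset hsub, ht, Finset.card_pair hxy]
  have hzt : z ∈ t \ {x, y} := hz ▸ Finset.mem_singleton_self z
  simp only [Finset.mem_sdiff, Finset.mem_insert, Finset.mem_singleton, not_or] at hzt
  refine ⟨z, hzt.2.1, hzt.2.2, ?_⟩
  rw [← Finset.union_sdiff_of_subset hsub, hz]
  ext w
  simp only [Finset.mem_union, Finset.mem_insert, Finset.mem_singleton, or_assoc]

namespace SimpleGraph

variable {W : Type*} {G : SimpleGraph W}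

lemma Walk.IsCycle.getVert_val_add_one {u : W} {p : G.Walk u u} (hp : p.IsCycle)
    (i : ZMod p.length) : p.getVert (i + 1).val = p.getVert (i.val + 1) := by
  have := hp.three_le_length
  have : NeZero p.length := ⟨by omega⟩
  have : Fact (1 < p.length) := ⟨by omega⟩
  rw [ZMod.val_add, ZMod.val_one]
  rcases (show i.val + 1 ≤ p.length from i.val_lt).lt_or_eq with h | h
  · rw [Nat.mod_eq_of_lt h]
  · rw [h, Nat.mod_self, Walk.getVert_zero, Walk.getVert_length]

lemma IsCycles.exists_zmod_cycle_range_eq_connectedComponentSupp [Finite W] (hG : G.IsCycles)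
    {u : W} (hu : (G.neighborSet u).Nonempty) :
    ∃ (n : ℕ) (f : ZMod n → W), 3 ≤ n ∧ Function.Injective f ∧
      Set.range f = (G.connectedComponentMk u).supp ∧
      ∀ i j, G.Adj (f i) (f j) ↔ j = i + 1 ∨ i = j + 1 := by
  obtain ⟨p, hp, hverts⟩ :=
    hG.exists_cycle_toSubgraph_verts_eq_connectedComponentSupp (c := G.connectedComponentMk u)
      rfl hu
  have hn := hp.three_le_length
  have : NeZero p.length := ⟨by omega⟩
  have hadj (i : ZMod p.length) : G.Adj (p.getVert i.val) (p.getVert (i + 1).val) := by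
    rw [hp.getVert_val_add_one]
    exact p.adj_getVert_succ i.val_lt
  have hinj : Function.Injective fun i : ZMod p.length => p.getVert i.val := fun i j h =>
    ZMod.val_injective _ <| hp.getVert_injOn'
      (by simp only [Set.mem_ofPred_eq]; have := i.val_lt; omega)
      (by simp only [Set.mem_ofPred_eq]; have := j.val_lt; omega) h
  refine ⟨p.length, fun i => p.getVert i.val, hn, hinj, ?_, fun i j => ⟨fun h => ?_, ?_⟩⟩
  · rw [← hverts]
    ext w
    rw [Walk.mem_verts_toSubgraph, Walk.mem_support_iff_exists_getVert]
    constructor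
    · rintro ⟨i, rfl⟩
      exact ⟨i.val, rfl, i.val_lt.le⟩
    · rintro ⟨m, rfl, hm⟩
      rcases hm.lt_or_eq with hm | rfl
      · exact ⟨m, by dsimp only; rw [ZMod.val_natCast, Nat.mod_eq_of_lt hm]⟩
      · exact ⟨0, by dsimp only; rw [ZMod.val_zero, Walk.getVert_zero, Walk.getVert_length]⟩
  · by_cases hj : j = i + 1
    · exact Or.inl hj
    have hne : i + 1 ≠ i - 1 := by
      intro h
      have h2 : ((2 : ℕ) : ZMod p.length) = 0 := by
        push_cast
        linear_combination h
      have := Nat.le_of_dvd two_pos ((ZMod.natCast_eq_zero_iff _ _).1 h2)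
      omega
    have hprev : G.Adj (p.getVert i.val) (p.getVert (i - 1).val) := by
      simpa using (hadj (i - 1)).symm
    -- vertex `i` has exactly one neighbour besides vertex `i + 1`; vertices `j` and `i - 1` qualify
    obtain ⟨w, -, huniq⟩ := hG.existsUnique_ne_adj (hadj i)
    have := (huniq _ ⟨fun e => hj (hinj e).symm, h⟩).trans
      (huniq _ ⟨fun e => hne (hinj e), hprev⟩).symm
    exact Or.inr (by rw [hinj this]; ring)
  · rintro (rfl | rfl)
    · exact hadj i
    · exact (hadj j).symm

end SimpleGraph

section Link

variable [DecidableEq V]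

def SC.linkGraph (K : SC V) (v : V) : SimpleGraph V where
  Adj u w := u ≠ v ∧ w ≠ v ∧ u ≠ w ∧ ({v, u, w} : Finset V) ∈ K.faces
  symm := ⟨fun _ _ ⟨hu, hw, huw, h⟩ => ⟨hw, hu, huw.symm, by rwa [Finset.pair_comm]⟩⟩
  loopless := ⟨fun _ h => h.2.2.1 rfl⟩

@[simp]
lemma SC.linkGraph_adj {K : SC V} {v u w : V} :
    (K.linkGraph v).Adj u w ↔ u ≠ v ∧ w ≠ v ∧ u ≠ w ∧ ({v, u, w} : Finset V) ∈ K.faces :=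
  Iff.rfl

lemma SC.edge_mem_of_linkGraph_adj {K : SC V} {v u w : V} (h : (K.linkGraph v).Adj u w) :
    ({v, u} : Finset V) ∈ K.faces :=
  K.down_closed _ (SC.linkGraph_adj.1 h).2.2.2 _ <|
    Finset.insert_subset_insert v (Finset.singleton_subset_iff.2 (Finset.mem_insert_self u {w}))

lemma SC.linkGraph_reachable_of_mem_face {K : SC V} {v x z : V} {t : Finset V}
    (ht : t ∈ K.faces) (hvt : v ∈ t) (hx : x ∈ t) (hz : z ∈ t) (hxv : x ≠ v) (hzv : z ≠ v) :
    (K.linkGraph v).Reachable x z := by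
  rcases eq_or_ne x z with rfl | hxz
  · rfl
  · refine SimpleGraph.Adj.reachable (SC.linkGraph_adj.2 ⟨hxv, hzv, hxz, K.down_closed t ht _ ?_⟩)
    simp only [Finset.insert_subset_iff, Finset.singleton_subset_iff]
    exact ⟨hvt, hx, hz⟩

lemma IsFlag.insert_mem {K : SC V} (hF : IsFlag K) {v : V} {s : Finset V}
    (hv : {v} ∈ K.faces) (hs : s ∈ K.faces)
    (hvs : ∀ u ∈ s, u ≠ v → ({v, u} : Finset V) ∈ K.faces) : insert v s ∈ K.faces := by
  refine hF _ (Finset.insert_nonempty v s) ?_ ?_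
  · intro u hu
    rcases Finset.mem_insert.1 hu with rfl | hu
    · exact hv
    · exact K.down_closed s hs _ (Finset.singleton_subset_iff.2 hu)
  · intro u hu w hw huw
    rw [Finset.mem_insert] at hu hw
    rcases hu with rfl | hu <;> rcases hw with rfl | hw
    · exact absurd rfl huw
    · exact hvs w hw huw.symm
    · rw [Finset.pair_comm]
      exact hvs u hu huw
    · refine K.down_closed s hs _ ?_
      simp only [Finset.insert_subset_iff, Finset.singleton_subset_iff]
      exact ⟨hu, hw⟩

end Link

namespace IsSphere2

variable [DecidableEq V] [Fintype V] {K : SC V}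

lemma ncard_neighborSet_linkGraph (hS : IsSphere2 K) {v u : V} (hu : u ≠ v)
    (he : ({v, u} : Finset V) ∈ K.faces) : ((K.linkGraph v).neighborSet u).ncard = 2 := by
  obtain ⟨-, -, -, hedge, -⟩ := hS
  have himage : (fun w => ({v, u, w} : Finset V)) '' (K.linkGraph v).neighborSet u =
      {t | t ∈ K.faces ∧ t.card = 3 ∧ ({v, u} : Finset V) ⊆ t} := by
    ext t
    constructor
    · rintro ⟨w, hw, rfl⟩
      obtain ⟨-, hwv, huw, ht⟩ := SC.linkGraph_adj.1 hw
      refine ⟨ht, Finset.card_eq_three.2 ⟨v, u, w, hu.symm, hwv.symm, huw, rfl⟩, ?_⟩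
      exact Finset.insert_subset_insert v
        (Finset.singleton_subset_iff.2 (Finset.mem_insert_self u {w}))
    · rintro ⟨ht, hcard, hsub⟩
      obtain ⟨w, hwv, hwu, rfl⟩ := Finset.exists_eq_triple_of_pair_subset hcard hu.symm hsub
      exact ⟨w, SC.linkGraph_adj.2 ⟨hu, hwv, hwu.symm, ht⟩, rfl⟩
  have hinj : Set.InjOn (fun w => ({v, u, w} : Finset V)) ((K.linkGraph v).neighborSet u) := by
    rintro w₁ hw₁ w₂ - h
    obtain ⟨-, hw₁v, huw₁, -⟩ := SC.linkGraph_adj.1 hw₁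
    have : w₁ ∈ ({v, u, w₂} : Finset V) := by
      simp only at h
      rw [← h]
      simp
    simp only [Finset.mem_insert, Finset.mem_singleton] at this
    exact this.resolve_left hw₁v |>.resolve_left huw₁.symm
  rw [← hinj.ncard_image, himage]
  exact hedge _ he (Finset.card_pair hu.symm)

lemma linkGraph_isCycles (hS : IsSphere2 K) (v : V) : (K.linkGraph v).IsCycles := by
  rintro u ⟨w, huw⟩
  exact hS.ncard_neighborSet_linkGraph (SC.linkGraph_adj.1 huw).1
    (SC.edge_mem_of_linkGraph_adj huw)

lemma linkGraph_reachable (hS : IsSphere2 K) {v u w : V}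
    (hvu : ({v, u} : Finset V) ∈ K.faces) (hu : u ≠ v)
    (hvw : ({v, w} : Finset V) ∈ K.faces) (hw : w ≠ v) : (K.linkGraph v).Reachable u w := by
  obtain ⟨-, -, hpure, -, hlink, -⟩ := hS
  obtain ⟨t₀, ht₀, hsub₀, hcard₀⟩ := hpure _ hvu
  obtain ⟨t, ht, hsub, hcard⟩ := hpure _ hvw
  have hchain := hlink v t₀ t ht₀ ht hcard₀ hcard (hsub₀ (by simp)) (hsub (by simp))
  suffices ∀ z ∈ t, z ≠ v → (K.linkGraph v).Reachable u z from this w (hsub (by simp)) hw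
  clear ht hsub hcard
  induction hchain with
  | refl => exact fun z hz hzv =>
      SC.linkGraph_reachable_of_mem_face ht₀ (hsub₀ (by simp)) (hsub₀ (by simp)) hz hu hzv
  | @tail b c _ hbc ih =>
    obtain ⟨-, hc, -, -, -, hvc, hbc2⟩ := hbc
    obtain ⟨y, hy, hyv⟩ := Finset.exists_mem_ne (show 1 < (b ∩ c).card by omega) v
    exact fun z hz hzv => (ih y (Finset.mem_inter.1 hy).1 hyv).trans
      (SC.linkGraph_reachable_of_mem_face hc hvc (Finset.mem_inter.1 hy).2 hz hyv hzv)

lemma exists_link_cycle (hS : IsSphere2 K) (v : V) :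
    ∃ (n : ℕ) (f : ZMod n → V), 3 ≤ n ∧ Function.Injective f ∧
      Set.range f = {u | u ≠ v ∧ ({v, u} : Finset V) ∈ K.faces} ∧
      ∀ i j, (K.linkGraph v).Adj (f i) (f j) ↔ j = i + 1 ∨ i = j + 1 := by
  have ⟨hvert, _, hpure, _⟩ := hS
  obtain ⟨t, ht, hvt, hcard⟩ := hpure _ (hvert v)
  obtain ⟨u, hut, huv⟩ := Finset.exists_mem_ne (show 1 < t.card by omega) v
  have hvu : ({v, u} : Finset V) ∈ K.faces := by
    refine K.down_closed t ht _ ?_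
    simp only [Finset.insert_subset_iff, Finset.singleton_subset_iff]
    exact ⟨Finset.singleton_subset_iff.1 hvt, hut⟩
  have hu : ((K.linkGraph v).neighborSet u).Nonempty :=
    Set.nonempty_of_ncard_ne_zero (by rw [hS.ncard_neighborSet_linkGraph huv hvu]; omega)
  obtain ⟨n, f, hn, hinj, hrange, hadj⟩ :=
    (hS.linkGraph_isCycles v).exists_zmod_cycle_range_eq_connectedComponentSupp hu
  refine ⟨n, f, hn, hinj, Set.Subset.antisymm ?_ ?_, hadj⟩
  · rintro _ ⟨i, rfl⟩
    have h := (hadj i (i + 1)).2 (Or.inl rfl)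
    exact ⟨(SC.linkGraph_adj.1 h).1, SC.edge_mem_of_linkGraph_adj h⟩
  · rintro w ⟨hwv, hvw⟩
    rw [hrange, SimpleGraph.ConnectedComponent.mem_supp_iff, SimpleGraph.ConnectedComponent.eq]
    exact (hS.linkGraph_reachable hvu huv hvw hwv).symm

lemma vertexSurrounded_of_isFlag (hS : IsSphere2 K) (hF : IsFlag K) (v : V) :
    VertexSurrounded K v := by
  have ⟨hvert, hdim, _⟩ := hS
  obtain ⟨n, f, hn, hinj, hrange, hadj⟩ := hS.exists_link_cycle v
  have hN (i : ZMod n) : f i ≠ v ∧ ({v, f i} : Finset V) ∈ K.faces :=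
    hrange.subset (Set.mem_range_self i)
  have hvdeg : K.vdeg v = n := by
    rw [SC.vdeg, ← hrange, Set.ncard_range_of_injective hinj, Nat.card_zmod]
  unfold VertexSurrounded
  rw [hvdeg]
  refine ⟨f, ⟨hn, hinj, fun i => ?_, fun i j hij hface => ?_, fun i j l hij hjl hil hface => ?_⟩,
    hrange⟩
  · refine K.down_closed _ (SC.linkGraph_adj.1 ((hadj i (i + 1)).2 (Or.inl rfl))).2.2.2 _ ?_
    exact Finset.subset_insert v _
  · refine (hadj i j).1 <|
      SC.linkGraph_adj.2 ⟨(hN i).1, (hN j).1, hinj.ne hij, hF.insert_mem (hvert v) hface ?_⟩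
    simp only [Finset.mem_insert, Finset.mem_singleton]
    rintro u (rfl | rfl) -
    exacts [(hN i).2, (hN j).2]
  · -- `v` is adjacent to the three, so flagness would produce a face with four vertices
    have h4 := hF.insert_mem (hvert v) hface (by
      simp only [Finset.mem_insert, Finset.mem_singleton]
      rintro u (rfl | rfl | rfl) -
      exacts [(hN i).2, (hN j).2, (hN l).2])
    have := hdim _ h4
    rw [Finset.card_insert_of_notMem (by simp [(hN i).1.symm, (hN j).1.symm, (hN l).1.symm]),
      Finset.card_eq_three.2 ⟨f i, f j, f l, hinj.ne hij, hinj.ne hil, hinj.ne hjl, rfl⟩] at this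
    omega

lemma insert_mem_of_isBelt (hS : IsSphere2 K) {a : V} {k : ℕ} {f : ZMod k → V}
    (hf : IsBelt K k f) (hrange : Set.range f = {u | u ≠ a ∧ ({a, u} : Finset V) ∈ K.faces})
    (i : ZMod k) : ({a, f i, f (i + 1)} : Finset V) ∈ K.faces := by
  obtain ⟨-, -, -, hchord, -⟩ := hf
  have hfi : f i ≠ a ∧ ({a, f i} : Finset V) ∈ K.faces := hrange.subset (Set.mem_range_self i)
  have hnbrs : (K.linkGraph a).neighborSet (f i) ⊆ {f (i + 1), f (i - 1)} := by
    intro w hw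
    obtain ⟨-, hwa, hiw, hface⟩ := SC.linkGraph_adj.1 hw
    obtain ⟨m, rfl⟩ : w ∈ Set.range f :=
      hrange ▸ ⟨hwa, SC.edge_mem_of_linkGraph_adj (SimpleGraph.adj_symm _ hw)⟩
    have hedge : ({f i, f m} : Finset V) ∈ K.faces :=
      K.down_closed _ hface _ (Finset.subset_insert a _)
    rcases hchord i m (fun h => hiw (h ▸ rfl)) hedge with rfl | rfl
    · exact Or.inl rfl
    · exact Or.inr (by simp)
  -- `f i` has two link neighbours, so `f (i + 1)` must be one of them
  have hadj : (K.linkGraph a).Adj (f i) (f (i + 1)) := by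
    by_contra h
    have hsub : (K.linkGraph a).neighborSet (f i) ⊆ {f (i - 1)} := fun w hw =>
      (hnbrs hw).resolve_left fun e => h (e ▸ hw)
    have := Set.ncard_le_ncard hsub (Set.finite_singleton _)
    rw [hS.ncard_neighborSet_linkGraph hfi.1 hfi.2, Set.ncard_singleton] at this
    omega
  exact (SC.linkGraph_adj.1 hadj).2.2.2

lemma triangle_mem_of_vertexSurrounded (hS : IsSphere2 K) {a b c : V}
    (ha : VertexSurrounded K a) (hab : a ≠ b) (hac : a ≠ c) (hbc : b ≠ c)
    (eab : ({a, b} : Finset V) ∈ K.faces) (eac : ({a, c} : Finset V) ∈ K.faces)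
    (ebc : ({b, c} : Finset V) ∈ K.faces) : ({a, b, c} : Finset V) ∈ K.faces := by
  obtain ⟨f, hf, hrange⟩ := ha
  obtain ⟨i, rfl⟩ : b ∈ Set.range f := hrange ▸ ⟨hab.symm, eab⟩
  obtain ⟨j, rfl⟩ : c ∈ Set.range f := hrange ▸ ⟨hac.symm, eac⟩
  rcases hf.2.2.2.1 i j (fun h => hbc (h ▸ rfl)) ebc with rfl | rfl
  · exact hS.insert_mem_of_isBelt hf hrange i
  · rw [Finset.pair_comm]
    exact hS.insert_mem_of_isBelt hf hrange j

lemma card_le_three_of_forall_vertexSurrounded (hS : IsSphere2 K)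
    (hB : ∀ v, VertexSurrounded K v) {s : Finset V}
    (hs : ∀ u ∈ s, ∀ w ∈ s, u ≠ w → ({u, w} : Finset V) ∈ K.faces) : s.card ≤ 3 := by
  by_contra! h4
  obtain ⟨a, ha⟩ : s.Nonempty := Finset.card_pos.1 (by omega)
  obtain ⟨t, hts, ht⟩ := Finset.exists_subset_card_eq
    (show 3 ≤ (s.erase a).card by rw [Finset.card_erase_of_mem ha]; omega)
  obtain ⟨b, c, d, hbc, hbd, hcd, rfl⟩ := Finset.card_eq_three.1 ht
  simp only [Finset.insert_subset_iff, Finset.singleton_subset_iff, Finset.mem_erase] at hts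
  obtain ⟨⟨hba, hb⟩, ⟨hca, hc⟩, ⟨hda, hd⟩⟩ := hts
  -- `b, c, d` lie on the belt around `a`, yet span a triangle
  obtain ⟨f, hf, hrange⟩ := hB a
  obtain ⟨i, rfl⟩ : b ∈ Set.range f := hrange ▸ ⟨hba, hs a ha _ hb hba.symm⟩
  obtain ⟨j, rfl⟩ : c ∈ Set.range f := hrange ▸ ⟨hca, hs a ha _ hc hca.symm⟩
  obtain ⟨l, rfl⟩ : d ∈ Set.range f := hrange ▸ ⟨hda, hs a ha _ hd hda.symm⟩
  exact hf.2.2.2.2 i j l (fun h => hbc (h ▸ rfl)) (fun h => hcd (h ▸ rfl))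
    (fun h => hbd (h ▸ rfl)) <| hS.triangle_mem_of_vertexSurrounded (hB _) hbc hbd hcd
      (hs _ hb _ hc hbc) (hs _ hb _ hd hbd) (hs _ hc _ hd hcd)

lemma isFlag_of_forall_vertexSurrounded (hS : IsSphere2 K) (hB : ∀ v, VertexSurrounded K v) :
    IsFlag K := by
  intro s hne _ hs
  have hcard := hS.card_le_three_of_forall_vertexSurrounded hB hs
  have hpos := hne.card_pos
  interval_cases h : s.card
  · obtain ⟨x, rfl⟩ := Finset.card_eq_one.1 h
    exact hS.1 x
  · obtain ⟨x, y, hxy, rfl⟩ := Finset.card_eq_two.1 h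
    exact hs x (by simp) y (by simp) hxy
  · obtain ⟨x, y, z, hxy, hxz, hyz, rfl⟩ := Finset.card_eq_three.1 h
    exact hS.triangle_mem_of_vertexSurrounded (hB x) hxy hxz hyz
      (hs x (by simp) y (by simp) hxy) (hs x (by simp) z (by simp) hxz)
      (hs y (by simp) z (by simp) hyz)

end IsSphere2

/-- A simple 3-polytope `P` (encoded by its dual simplicial 2-sphere `K`) is flag
if and only if every facet of `P` is surrounded by a `k`-belt,
where `k` is the number of edges of that facet. -/
theorem stmt5 {V : Type} [DecidableEq V] [Fintype V] (K : SC V) (hS : IsSphere2 K) :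
    IsFlag K ↔ ∀ v : V, VertexSurrounded K v :=
  ⟨hS.vertexSurrounded_of_isFlag, hS.isFlag_of_forall_vertexSurrounded⟩
end

section
/- Let K be a simplicial complex on [m] and J ⊆ [m]. The multigraded component R^{*, 2J}(K) of the dg-algebra R*(K) is isomorphic as a cochain complex to the augmented simplicial cochain complex of the full subcomplex K_J, via the map sending the characteristic cochain χ_L of a simplex L ∈ K_J (with |L| = p+1) to ±u_{J∖L} v_L in R^{−|J|+p+1, 2J}(K), for a suitable choice of signs ε(L,J). -/
variable {V : Type}
/-- The sign `(-1)^{number of elements of J smaller than j}`. -/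
def eps [LinearOrder V] (J : Finset V) (j : V) : ℤ :=
  (-1) ^ (J.filter (fun a => a < j)).card
section RAlgebra
variable [LinearOrder V]
attribute [local instance] Classical.propDecidable

/-- The pair `(J, I)` indexes an admissible monomial `u_J v_I` of
`R*(K) = Λ[u_1,…,u_m] ⊗ ℤ[K]/(v_i² = u_i v_i = 0)`. -/
def SC.admissible (K : SC V) (p : Finset V × Finset V) : Prop :=
  Disjoint p.1 p.2 ∧ p.2 ∈ K.faces

/-- The underlying abelian group of the algebra
`R*(K) = Λ[u_1,…,u_m] ⊗ ℤ[K]/(v_i² = u_i v_i = 0)`: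
the free abelian group on the monomials `u_J v_I`, `I ∈ K`, `I ∩ J = ∅`.
It is a cochain model of the moment-angle complex `Z_K`. -/
abbrev RK (K : SC V) : Type := {p : Finset V × Finset V // K.admissible p} →₀ ℤ

/-- The monomial `u_{p.1} v_{p.2}` of `R*(K)` (equal to `0` if `p` is not admissible,
which encodes the relations `v_i² = u_i v_i = 0` and the Stanley–Reisner relations). -/
noncomputable def RK.mk (K : SC V) (p : Finset V × Finset V) : RK K :=
  if h : K.admissible p then Finsupp.single ⟨p, h⟩ 1 else 0

/-- The differential on a monomial: `d(u_J v_I) = Σ_{j∈J} ± u_{J∖j} v_{I∪j}`. -/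
noncomputable def dB (K : SC V) (p : Finset V × Finset V) : RK K :=
  ∑ j ∈ p.1, eps p.1 j • RK.mk K (p.1.erase j, insert j p.2)

/-- The differential of `R*(K)` (sending `u_i ↦ v_i`, `v_i ↦ 0`). -/
noncomputable def dR (K : SC V) (x : RK K) : RK K :=
  x.sum fun p c => c • dB K p.val

/-- The Koszul sign of the shuffle merging `u_J` and `u_{J'}`. -/
noncomputable def shuffleSign (J J' : Finset V) : ℤ :=
  (-1) ^ (∑ a ∈ J, (J'.filter (fun b => b < a)).card)

/-- Product of monomials of `R*(K)`. -/
noncomputable def mulB (K : SC V) (p q : Finset V × Finset V) : RK K :=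
  if Disjoint (p.1 ∪ p.2) (q.1 ∪ q.2) then
    shuffleSign p.1 q.1 • RK.mk K (p.1 ∪ q.1, p.2 ∪ q.2)
  else 0

/-- The product of the algebra `R*(K)`. -/
noncomputable def mulR (K : SC V) (x y : RK K) : RK K :=
  x.sum fun p c => y.sum fun q c' => (c * c') • mulB K p.val q.val

/-- `x` is homogeneous of total (cellular) degree `k`: `deg u_i = 1`, `deg v_i = 2`;
so `x` represents a class of `H^k(Z_K)`. -/
def homogTotal (K : SC V) (x : RK K) (k : ℕ) : Prop :=
  ∀ p ∈ x.support, p.val.1.card + 2 * p.val.2.card = k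

/-- `x` is supported in multidegree `2S`, i.e. in the Hochster summand of the
full subcomplex `K_S`. -/
def homogM (K : SC V) (x : RK K) (S : Finset V) : Prop :=
  ∀ p ∈ x.support, p.val.1 ∪ p.val.2 = S

/-- `x` and `y` are cohomologous cocycles (differ by a coboundary). -/
def Cohomologous (K : SC V) (x y : RK K) : Prop := ∃ t : RK K, x = y + dR K t

/-- The set of all cocycle-level values of the triple Massey product
`⟨[a], [b], [c]⟩` (with `k₁ = deg a`), saturated under coboundaries: all choices of
representing cocycles and of primitives `w₁, w₂` with `d w₁ = a'b'`, `d w₂ = b'c'`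
give `±a'w₂ + w₁c'` up to a coboundary.  A cohomology class belongs to the Massey
product iff one (hence any) of its representing cocycles lies in this set. -/
def MasseySet (K : SC V) (k₁ : ℕ) (a b c : RK K) : Set (RK K) :=
  {z | ∃ a' b' c' w₁ w₂ t : RK K,
    dR K a' = 0 ∧ dR K b' = 0 ∧ dR K c' = 0 ∧
    Cohomologous K a' a ∧ Cohomologous K b' b ∧ Cohomologous K c' c ∧
    dR K w₁ = mulR K a' b' ∧ dR K w₂ = mulR K b' c' ∧
    z = ((-1 : ℤ) ^ (k₁ + 1)) • mulR K a' w₂ + mulR K w₁ c' + dR K t}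

end RAlgebra
section Cochains
variable [LinearOrder V]
attribute [local instance] Classical.propDecidable

/-- The augmented simplicial cochain group of the full subcomplex `K_J`:
`SCoch K J k` is spanned by the characteristic cochains `χ_L` of the
`(k-1)`-dimensional simplices `L ∈ K_J` (`k = |L|`; the case `k = 0`, `L = ∅`
gives the augmentation `ℤ` in degree `-1`).  So `SCoch K J (p+1)` are the reduced
`p`-cochains of `K_J`. -/
abbrev SCoch (K : SC V) (J : Finset V) (k : ℕ) : Type :=
  {L : Finset V // L ∈ K.faces ∧ L ⊆ J ∧ L.card = k} →₀ ℤ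

/-- The characteristic cochain `χ_L` (or `0` if `L` is not a `(k-1)`-simplex of `K_J`). -/
noncomputable def SCoch.mk (K : SC V) (J : Finset V) (k : ℕ) (L : Finset V) : SCoch K J k :=
  if h : L ∈ K.faces ∧ L ⊆ J ∧ L.card = k then Finsupp.single ⟨L, h⟩ 1 else 0

/-- The simplicial coboundary map of the (augmented) cochain complex of `K_J`. -/
noncomputable def delta (K : SC V) (J : Finset V) (k : ℕ) (x : SCoch K J k) :
    SCoch K J (k + 1) :=
  x.sum fun L c => ∑ j ∈ J \ L.val, (c * eps L.val j) • SCoch.mk K J (k + 1) (insert j L.val)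

end Cochains

/-- The cochain map `χ_L ↦ ε(L,J) u_{J∖L} v_L` (for a sign function `sgn`). -/
noncomputable def Phi {V : Type} [LinearOrder V] (K : SC V) (J : Finset V) (k : ℕ)
    (sgn : Finset V → ℤ) (x : SCoch K J k) : RK K :=
  x.sum fun L c => (c * sgn L.val) • RK.mk K (J \ L.val, L.val)

/-!
The monomials `u_{J∖L} v_L` of multidegree `2J` are exactly the admissible ones with `L ∈ K_J`,
so up to signs the map `χ_L ↦ u_{J∖L} v_L` is a bijection of bases. Both differentials add one
vertex `j ∈ J ∖ L` to `L`, with the Koszul signs `(-1)^{#{a ∈ J∖L | a < j}}` on the algebra side and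
`(-1)^{#{a ∈ L | a < j}}` on the simplicial side; their product `(-1)^{#{a ∈ J | a < j}}` no longer
depends on `L`, so it is absorbed by the sign `ε(L, J) = (-1)^{Σ_{l ∈ L} #{a ∈ J | a < l}}`.
-/

section Hochster

open Finset Finsupp

theorem RK.mk_of_admissible (K : SC V) {p : Finset V × Finset V} (h : K.admissible p) :
    RK.mk K p = single ⟨p, h⟩ 1 :=
  dif_pos h

variable [LinearOrder V]

def faceSign (J L : Finset V) : ℤ :=
  (-1) ^ ∑ l ∈ L, #{a ∈ J | a < l}

theorem faceSign_isUnit (J L : Finset V) : IsUnit (faceSign J L) :=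
  isUnit_neg_one.pow _

theorem faceSign_mul_eps_sdiff {J L : Finset V} (hLJ : L ⊆ J) {j : V} (hj : j ∉ L) :
    faceSign J L * eps (J \ L) j = eps L j * faceSign J (insert j L) := by
  have hlt : {a ∈ L | a < j} ⊆ {a ∈ J | a < j} := filter_subset_filter _ hLJ
  have hcard : #{a ∈ J \ L | a < j} = #{a ∈ J | a < j} - #{a ∈ L | a < j} := by
    rw [← card_sdiff_of_subset hlt]
    congr 1
    ext a
    simp only [mem_filter, mem_sdiff]
    tauto
  have hle := card_le_card hlt
  rw [faceSign, faceSign, eps, eps, sum_insert hj, hcard, ← pow_add, ← pow_add,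
    neg_one_pow_eq_pow_mod_two, neg_one_pow_eq_pow_mod_two (R := ℤ) (_ + _)]
  congr 1
  omega

abbrev FullFace (K : SC V) (J : Finset V) (k : ℕ) : Type :=
  {L : Finset V // L ∈ K.faces ∧ L ⊆ J ∧ L.card = k}

def faceEmb (K : SC V) (J : Finset V) (k : ℕ) : FullFace K J k ↪ {p // K.admissible p} where
  toFun L := ⟨(J \ L.1, L.1), sdiff_disjoint, L.2.1⟩
  inj' _ _ h := Subtype.ext (congrArg (fun p => p.1.2) h)

theorem mem_range_faceEmb {K : SC V} {J : Finset V} {k : ℕ} {p : {p // K.admissible p}} :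
    p ∈ Set.range (faceEmb K J k) ↔ p.1.1 ∪ p.1.2 = J ∧ #p.1.2 = k := by
  constructor
  · rintro ⟨L, rfl⟩
    exact ⟨sdiff_union_of_subset L.2.2.1, L.2.2.2⟩
  · rintro ⟨rfl, rfl⟩
    exact ⟨⟨p.1.2, p.2.2, subset_union_right, rfl⟩,
      Subtype.ext (Prod.ext (union_sdiff_cancel_right p.2.1) rfl)⟩

variable (K : SC V) (J : Finset V) (k : ℕ)

section Phi

variable (sgn : Finset V → ℤ)

theorem Phi_eq_linearCombination (x : SCoch K J k) :
    Phi K J k sgn x =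
      linearCombination ℤ (fun L : FullFace K J k => sgn L.1 • RK.mk K (J \ L.1, L.1)) x := by
  simp only [Phi, linearCombination_apply, mul_smul]

theorem Phi_add (x y : SCoch K J k) :
    Phi K J k sgn (x + y) = Phi K J k sgn x + Phi K J k sgn y := by
  simp only [Phi_eq_linearCombination, map_add]

theorem Phi_single (L : FullFace K J k) (c : ℤ) :
    Phi K J k sgn (single L c) = single (faceEmb K J k L) (sgn L.1 * c) := by
  rw [Phi, sum_single_index (by simp),
    RK.mk_of_admissible K (p := (J \ L.1, L.1)) ⟨sdiff_disjoint, L.2.1⟩, smul_single,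
    smul_eq_mul, mul_one, mul_comm]
  rfl

theorem Phi_eq_embDomain (x : SCoch K J k) :
    Phi K J k sgn x = embDomain (faceEmb K J k) ((fun L : FullFace K J k => sgn L.1) • x) := by
  induction x using Finsupp.induction_linear with
  | zero => simp [Phi]
  | add x y hx hy =>
    rw [Phi_add, hx, hy, smul_add, embDomain_add]
  | single L c =>
    have hsmul : (fun L : FullFace K J k => sgn L.1) • single L c = single L (sgn L.1 * c) := by
      ext L'
      by_cases h : L = L' <;> simp [h]
    rw [Phi_single, hsmul, embDomain_single]

theorem Phi_injective (hsgn : ∀ L, sgn L ≠ 0) : Function.Injective (Phi K J k sgn) := by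
  intro x y hxy
  rw [Phi_eq_embDomain, Phi_eq_embDomain] at hxy
  ext L
  simpa [hsgn] using DFunLike.congr_fun (embDomain_injective _ hxy) L

theorem range_Phi (hsgn : ∀ L, IsUnit (sgn L)) :
    Set.range (Phi K J k sgn) =
      {y : RK K | ∀ p ∈ y.support, p.val.1 ∪ p.val.2 = J ∧ p.val.2.card = k} := by
  have hinv (x : SCoch K J k) :
      (fun L : FullFace K J k => sgn L.1) • (fun L : FullFace K J k => sgn L.1) • x = x := by
    ext L
    simp [← mul_assoc, Int.isUnit_mul_self (hsgn L.1)]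
  have hPhi : Phi K J k sgn =
      embDomain (faceEmb K J k) ∘ ((fun L : FullFace K J k => sgn L.1) • ·) :=
    funext (Phi_eq_embDomain K J k sgn)
  rw [hPhi, Set.range_comp, (Function.LeftInverse.surjective hinv).range_eq, Set.image_univ]
  ext y
  rw [mem_range_embDomain_iff]
  exact forall₂_congr fun p _ => mem_range_faceEmb

theorem Phi_mk {N : Finset V} (hNJ : N ⊆ J) (hN : #N = k) :
    Phi K J k sgn (SCoch.mk K J k N) = sgn N • RK.mk K (J \ N, N) := by
  by_cases hf : N ∈ K.faces
  · rw [SCoch.mk, dif_pos ⟨hf, hNJ, hN⟩, Phi_eq_linearCombination, linearCombination_single,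
      one_smul]
  · rw [SCoch.mk, dif_neg (fun h => hf h.1), Phi_eq_linearCombination, map_zero, RK.mk,
      dif_neg (fun h => hf h.2), smul_zero]

end Phi

theorem dR_single (p : {p // K.admissible p}) (c : ℤ) : dR K (single p c) = c • dB K p.1 :=
  sum_single_index (zero_smul _ _)

theorem dR_add (x y : RK K) : dR K (x + y) = dR K x + dR K y :=
  sum_add_index' (fun _ => zero_smul _ _) (fun _ _ _ => add_smul _ _ _)

-- `dB` and `delta` were elaborated with classical decidability; these restate them with the
-- decidable equality of the linear order.
theorem dB_eq (p : Finset V × Finset V) :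
    dB K p = ∑ j ∈ p.1, eps p.1 j • RK.mk K (p.1.erase j, insert j p.2) := by
  unfold dB
  congr!

theorem delta_single (L : FullFace K J k) (c : ℤ) :
    delta K J k (single L c) =
      ∑ j ∈ J \ L.1, (c * eps L.1 j) • SCoch.mk K J (k + 1) (insert j L.1) := by
  unfold delta
  rw [sum_single_index (by simp)]
  congr!

theorem delta_add (x y : SCoch K J k) :
    delta K J k (x + y) = delta K J k x + delta K J k y :=
  sum_add_index' (by simp) (by simp [add_mul, add_smul, sum_add_distrib])

theorem dR_Phi_faceSign (x : SCoch K J k) :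
    dR K (Phi K J k (faceSign J) x) = Phi K J (k + 1) (faceSign J) (delta K J k x) := by
  induction x using Finsupp.induction_linear with
  | zero => simp [Phi, dR, delta]
  | add x y hx hy => rw [Phi_add, dR_add, delta_add, Phi_add, hx, hy]
  | single L c =>
    obtain ⟨L, hLf, hLJ, hLk⟩ := L
    rw [Phi_single, dR_single, delta_single, Phi_eq_linearCombination, map_sum, dB_eq,
      Finset.smul_sum]
    refine sum_congr rfl fun j hj => ?_
    obtain ⟨hjJ, hjL⟩ := mem_sdiff.1 hj
    rw [map_zsmul, ← Phi_eq_linearCombination,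
      Phi_mk _ _ _ _ (insert_subset hjJ hLJ) (by rw [card_insert_of_notMem hjL, hLk]),
      smul_smul, smul_smul, sdiff_insert]
    congr 1
    simp only [faceEmb]
    linear_combination c * faceSign_mul_eps_sdiff hLJ hjL

end Hochster

/-- The multigraded component `R^{*, 2J}(K)` is isomorphic, as a cochain complex, to
the augmented simplicial cochain complex of the full subcomplex `K_J`, via
`χ_L ↦ ε(L,J) u_{J∖L} v_L` for a suitable choice of signs `ε(L,J) = ±1`: this map
commutes with the differentials, is injective, and its image is exactly the
multigraded component of multidegree `2J` and cohomological position `|L| = k`. -/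
theorem stmt9 {V : Type} [LinearOrder V] (K : SC V) (J : Finset V) :
    ∃ sgn : Finset V → ℤ, (∀ L : Finset V, sgn L = 1 ∨ sgn L = -1) ∧
      ∀ k : ℕ,
        (∀ x : SCoch K J k,
          dR K (Phi K J k sgn x) = Phi K J (k + 1) sgn (delta K J k x)) ∧
        Function.Injective (Phi K J k sgn) ∧
        Set.range (Phi K J k sgn) =
          {y : RK K | ∀ p ∈ y.support, p.val.1 ∪ p.val.2 = J ∧ p.val.2.card = k} :=
  ⟨faceSign J, fun L => Int.isUnit_iff.mp (faceSign_isUnit J L), fun k =>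
    ⟨dR_Phi_faceSign K J k, Phi_injective K J k _ fun L => (faceSign_isUnit J L).ne_zero,
      range_Phi K J k _ (faceSign_isUnit J)⟩⟩
end

section
/- Under the identification of R*(K) with the direct sum over J ⊆ [m] of augmented simplicial cochain complexes of full subcomplexes K_J, the product of basis cochains is given (up to sign) by: χ_L ∈ C^{p−1}(K_I) times χ_M ∈ C^{q−1}(K_J) equals χ_{L⊔M} ∈ C^{p+q−1}(K_{I∪J}) if I ∩ J = ∅ and L ⊔ M ∈ K, and equals 0 otherwise. -/
variable {V : Type}
section RAlgebra
variable [LinearOrder V]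
attribute [local instance] Classical.propDecidable

end RAlgebra

attribute [local instance] Classical.propDecidable

/-- Under the identification of `R*(K)` with the direct sum of augmented simplicial
cochain complexes of full subcomplexes (`χ_L ↦ ± u_{I∖L} v_L`), the product of basis
cochains `χ_L ∈ C^{p-1}(K_I)` and `χ_M ∈ C^{q-1}(K_J)` is, up to sign, `χ_{L⊔M} ∈
C^{p+q-1}(K_{I∪J})` if `I ∩ J = ∅` and `L ⊔ M ∈ K`, and `0` otherwise. -/
theorem stmt10 {V : Type} [LinearOrder V] (K : SC V) (I J L M : Finset V)
    (hL : L ∈ K.faces) (hLI : L ⊆ I) (hM : M ∈ K.faces) (hMJ : M ⊆ J) :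
    ∃ s : ℤ, (s = 1 ∨ s = -1) ∧
      mulR K (RK.mk K (I \ L, L)) (RK.mk K (J \ M, M)) =
        if Disjoint I J ∧ (L ∪ M) ∈ K.faces
        then s • RK.mk K ((I ∪ J) \ (L ∪ M), L ∪ M) else 0 := by
  refine ⟨shuffleSign (I \ L) (J \ M), ?_, ?_⟩
  · unfold shuffleSign
    exact (Nat.even_or_odd _).imp Even.neg_one_pow Odd.neg_one_pow
  · have hadm1 : K.admissible (I \ L, L) := ⟨Finset.sdiff_disjoint, hL⟩
    have hadm2 : K.admissible (J \ M, M) := ⟨Finset.sdiff_disjoint, hM⟩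
    have e1 : RK.mk K (I \ L, L) = Finsupp.single ⟨(I \ L, L), hadm1⟩ 1 := by
      unfold RK.mk; rw [dif_pos hadm1]
    have e2 : RK.mk K (J \ M, M) = Finsupp.single ⟨(J \ M, M), hadm2⟩ 1 := by
      unfold RK.mk; rw [dif_pos hadm2]
    unfold mulR
    simp only [e1, e2]
    rw [Finsupp.sum_single_index, Finsupp.sum_single_index]
    · simp only [one_mul, one_smul]
      unfold mulB
      have hIL : I \ L ∪ L = I := Finset.sdiff_union_of_subset hLI
      have hJM : J \ M ∪ M = J := Finset.sdiff_union_of_subset hMJ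
      simp only [hIL, hJM]
      split_ifs with hd h2 h2
      · -- hd : Disjoint I J, h2 : Disjoint I J ∧ L ∪ M ∈ K.faces
        have hu : I \ L ∪ J \ M = (I ∪ J) \ (L ∪ M) := by
          have hd' : ∀ a, a ∈ I → a ∉ J := fun a ha => Finset.disjoint_left.mp hd ha
          ext a
          simp only [Finset.mem_sdiff, Finset.mem_union]
          constructor
          · rintro (⟨h1, h3⟩ | ⟨h1, h3⟩)
            · exact ⟨Or.inl h1, by rintro (h | h); exact h3 h; exact hd' a h1 (hMJ h)⟩
            · exact ⟨Or.inr h1, by rintro (h | h); exact hd' a (hLI h) h1; exact h3 h⟩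
          · rintro ⟨h1 | h1, h3⟩
            · exact Or.inl ⟨h1, fun h => h3 (Or.inl h)⟩
            · exact Or.inr ⟨h1, fun h => h3 (Or.inr h)⟩
        rw [hu]
      · -- hd : Disjoint I J, h2 : ¬(Disjoint I J ∧ L ∪ M ∈ K.faces)
        have hf : (L ∪ M : Finset V) ∉ K.faces := fun h => h2 ⟨hd, h⟩
        rw [show RK.mk K (I \ L ∪ J \ M, L ∪ M) = 0 from dif_neg (fun h => hf h.2)]
        rw [smul_zero]
      · exact absurd h2.1 hd
      · rfl
    · simp
    · simp [Finsupp.sum_single_index]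
end

section
/- For any Pogorelov polytope P, there exist a natural number n ≥ 5, l ≥ 5 and pairwise distinct facets F₁, …, F_{l+n−1} such that F₁, F₂, F₃ pairwise intersect in a common vertex, |F₁| = 5, |F₂| = l, |F₃| = n, and the remaining l + n − 4 facets (F₄, F₈, …, F_{l+3}, F₅, F_{l+4}, …, F_{l+n−1}, F₆, F₇) form a belt surrounding the triple {F₁, F₂, F₃}. -/
variable {V : Type}
/-- The label (1-based, as in the paper) of the `p`-th facet of the belt
`(F₄, F₈, …, F_{l+3}, F₅, F_{l+4}, …, F_{l+n−1}, F₆, F₇)` surrounding `{F₁, F₂, F₃}`. -/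
def beltLabel (l n p : ℕ) : ℕ :=
  if p = 0 then 4
  else if p ≤ l - 4 then p + 7
  else if p = l - 3 then 5
  else if p ≤ l + n - 7 then p + 6
  else if p = l + n - 6 then 6
  else 7

/-!
Euler's formula gives a vertex `v₁` of degree at most 5. The link of a vertex of a flag sphere
is a belt: the common neighbours of the endpoints of an edge are the apexes of its two
triangles, so the link is 2-regular, and it is connected through the triangles around the
vertex. A flag sphere has no 3-belts and a Pogorelov one no 4-belts, so all degrees are at
least 5 and `v₁` has degree exactly 5.

Take any triangle `v₁ v₂ v₃`. The vertices adjacent to it again induce a 2-regular graph: a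
vertex adjacent to only one `vᵢ` has exactly its two link neighbours around `vᵢ` as neighbours,
since any other one would close a chordless 4-cycle, i.e. a 4-belt. This graph is connected
because each link minus the two other triangle vertices is a path, and inclusion–exclusion over
the three links shows it has `l + n - 4` vertices. A chordless cycle of length at least 4 is a
belt.
-/

theorem ZMod.natCast_ne_zero_of_lt {k c : ℕ} (hc : 0 < c) (hck : c < k) :
    ((c : ℕ) : ZMod k) ≠ 0 := by
  rw [Ne, ZMod.natCast_eq_zero_iff]
  exact fun h => absurd (Nat.le_of_dvd hc h) (by omega)

theorem ZMod.ne_and_ne_add_one_iff {k : ℕ} [NeZero k] {i j : ZMod k} :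
    i ≠ j ∧ i ≠ j + 1 ↔ ∃ t : ℕ, t + 2 < k ∧ i = j + 2 + t := by
  constructor
  · rintro ⟨hi, hi₁⟩
    refine ⟨(i - j - 2).val, ?_, by rw [ZMod.natCast_zmod_val]; ring⟩
    have hlt := (i - j - 2).val_lt
    by_contra! hle
    have hcast : (((i - j - 2).val + 2 : ℕ) : ZMod k) = i - j := by
      push_cast; rw [ZMod.natCast_zmod_val]; ring
    rcases (by omega : (i - j - 2).val + 2 = k ∨ (i - j - 2).val + 2 = k + 1) with h | h
    · rw [h, ZMod.natCast_self] at hcast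
      exact hi (by linear_combination -hcast)
    · rw [h, Nat.cast_succ, ZMod.natCast_self] at hcast
      exact hi₁ (by linear_combination -hcast)
  · rintro ⟨t, ht, rfl⟩
    exact ⟨fun h => ZMod.natCast_ne_zero_of_lt (k := k) (c := t + 2) (by omega) ht
        (by push_cast; linear_combination h),
      fun h => ZMod.natCast_ne_zero_of_lt (k := k) (c := t + 1) (by omega) (by omega)
        (by push_cast; linear_combination h)⟩

theorem ZMod.false_of_pairwise_adjacent {k : ℕ} (hk : 4 ≤ k) {i j l : ZMod k} (hij : i ≠ j)
    (hjl : j ≠ l) (hil : i ≠ l) (h₁ : j = i + 1 ∨ i = j + 1) (h₂ : l = j + 1 ∨ j = l + 1)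
    (h₃ : l = i + 1 ∨ i = l + 1) : False := by
  have h3 : ((3 : ℕ) : ZMod k) ≠ 0 := ZMod.natCast_ne_zero_of_lt (by norm_num) (by omega)
  push_cast at h3
  rcases h₁ with rfl | rfl <;> rcases h₂ with rfl | h₂ <;> rcases h₃ with h₃ | h₃ <;>
    first | grind | exact h3 (by linear_combination -h₃)

theorem Set.exists_eq_pair_of_ncard_eq_two {α : Type*} {s : Set α} (hs : s.ncard = 2) {a : α}
    (ha : a ∈ s) : ∃ b, b ≠ a ∧ s = {a, b} := by
  obtain ⟨x, y, hxy, rfl⟩ := Set.ncard_eq_two.1 hs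
  rcases ha with rfl | rfl
  · exact ⟨y, hxy.symm, rfl⟩
  · exact ⟨x, hxy, Set.pair_comm _ _⟩

theorem Finset.exists_eq_insert_pair_of_card_eq_three {α : Type*} [DecidableEq α]
    {t : Finset α} (ht : t.card = 3) {a b : α} (ha : a ∈ t) (hb : b ∈ t) (hab : a ≠ b) :
    ∃ w, t = {w, a, b} := by
  have hsub : ({a, b} : Finset α) ⊆ t :=
    Finset.insert_subset ha (Finset.singleton_subset_iff.2 hb)
  obtain ⟨w, hw⟩ : ∃ w, t \ {a, b} = {w} := by
    rw [← Finset.card_eq_one, Finset.card_sdiff_of_subset hsub, ht, Finset.card_pair hab]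
  exact ⟨w, by rw [Finset.insert_eq, ← hw, Finset.sdiff_union_of_subset hsub]⟩

namespace SimpleGraph

variable {G : SimpleGraph V}

theorem IsCycles.exists_zmod_cycle [Finite V] (hG : G.IsCycles) {v : V}
    (hv : (G.neighborSet v).Nonempty) :
    ∃ f : ZMod (G.connectedComponentMk v).supp.ncard → V,
      3 ≤ (G.connectedComponentMk v).supp.ncard ∧ Function.Injective f ∧
      Set.range f = (G.connectedComponentMk v).supp ∧ (∀ i, G.Adj (f i) (f (i + 1))) ∧
      ∀ i j, G.Adj (f i) (f j) → j = i + 1 ∨ i = j + 1 := by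
  obtain ⟨p, hp, hverts⟩ := hG.exists_cycle_toSubgraph_verts_eq_connectedComponentSupp rfl hv
  suffices ∃ f : ZMod p.length → V, Function.Injective f ∧
      Set.range f = (G.connectedComponentMk v).supp ∧ (∀ i, G.Adj (f i) (f (i + 1))) ∧
      ∀ i j, G.Adj (f i) (f j) → j = i + 1 ∨ i = j + 1 by
    obtain ⟨f, hinj, hrange, hadj, hchord⟩ := this
    have hlen : p.length = (G.connectedComponentMk v).supp.ncard := by
      rw [← hrange, Set.ncard_range_of_injective hinj, Nat.card_zmod]
    rw [← hlen]
    exact ⟨f, hp.three_le_length, hinj, hrange, hadj, hchord⟩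
  have hpos : NeZero p.length := ⟨by have := hp.three_le_length; omega⟩
  set f : ZMod p.length → V := fun i => p.getVert i.val
  -- `getVert` at `p.length` is back at the start, so casting indices into `ZMod` is harmless
  have hf : ∀ n ≤ p.length, f n = p.getVert n := by
    intro n hn
    rcases hn.lt_or_eq with hn | rfl
    · simp only [f, ZMod.val_cast_of_lt hn]
    · simp [f, Walk.getVert_length]
  have hsucc : ∀ i : ZMod p.length, i + 1 = ((i.val + 1 : ℕ) : ZMod p.length) := by
    intro i; simp
  have hinj : Function.Injective f := fun i j h =>
    ZMod.val_injective _ (hp.getVert_injOn' (by simp; have := i.val_lt; omega)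
      (by simp; have := j.val_lt; omega) h)
  refine ⟨f, hinj, ?_, fun i => ?_, fun i j hij => ?_⟩
  · rw [← hverts]
    ext w
    simp only [Set.mem_range, Walk.mem_verts_toSubgraph, Walk.mem_support_iff_exists_getVert]
    constructor
    · rintro ⟨i, rfl⟩
      exact ⟨i.val, rfl, i.val_lt.le⟩
    · rintro ⟨n, rfl, hn⟩
      exact ⟨n, hf n hn⟩
  · rw [hsucc, hf _ i.val_lt]
    exact p.adj_getVert_succ i.val_lt
  · have hmem : f i ∈ p.support :=
      Walk.mem_support_iff_exists_getVert.2 ⟨i.val, rfl, i.val_lt.le⟩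
    have hnbr : p.toSubgraph.neighborSet (f i) = G.neighborSet (f i) :=
      Set.eq_of_subset_of_ncard_le (p.toSubgraph.neighborSet_subset _)
        (by rw [hp.ncard_neighborSet_toSubgraph_eq_two hmem, hG ⟨_, hij⟩])
    have hsub : p.toSubgraph.Adj (f i) (f j) := by
      rw [← Subgraph.mem_neighborSet, hnbr]; exact hij
    obtain ⟨n, he, hn⟩ := p.toSubgraph_adj_iff.1 hsub
    rw [← hf n hn.le, ← hf (n + 1) hn, Nat.cast_succ] at he
    rcases Sym2.eq_iff.1 he with ⟨h1, h2⟩ | ⟨h1, h2⟩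
    · left; rw [← hinj h1, hinj h2]
    · right; rw [← hinj h1, hinj h2]

end SimpleGraph

namespace IsSphere2

variable [DecidableEq V] [Fintype V] {K : SC V}

theorem singleton_mem (hS : IsSphere2 K) (v : V) : ({v} : Finset V) ∈ K.faces :=
  hS.1 v

theorem card_le_three (hS : IsSphere2 K) {s : Finset V} (hs : s ∈ K.faces) : s.card ≤ 3 :=
  hS.2.1 s hs

theorem exists_triangle_superset (hS : IsSphere2 K) {s : Finset V} (hs : s ∈ K.faces) :
    ∃ t ∈ K.faces, s ⊆ t ∧ t.card = 3 :=
  hS.2.2.1 s hs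

theorem ncard_triangles_superset (hS : IsSphere2 K) {e : Finset V} (he : e ∈ K.faces)
    (hc : e.card = 2) :
    {t | t ∈ K.faces ∧ t.card = 3 ∧ e ⊆ t}.ncard = 2 :=
  hS.2.2.2.1 e he hc

theorem reflTransGen_triangles (hS : IsSphere2 K) {v : V} {t t' : Finset V} (ht : t ∈ K.faces)
    (ht' : t' ∈ K.faces) (hc : t.card = 3) (hc' : t'.card = 3) (hv : v ∈ t) (hv' : v ∈ t') :
    Relation.ReflTransGen
      (fun a b => a ∈ K.faces ∧ b ∈ K.faces ∧ a.card = 3 ∧ b.card = 3 ∧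
        v ∈ a ∧ v ∈ b ∧ (a ∩ b).card = 2) t t' :=
  hS.2.2.2.2.1 v t t' ht ht' hc hc' hv hv'

theorem euler (hS : IsSphere2 K) :
    ({s | s ∈ K.faces ∧ s.card = 1}.ncard : ℤ) - {s | s ∈ K.faces ∧ s.card = 2}.ncard
      + {s | s ∈ K.faces ∧ s.card = 3}.ncard = 2 :=
  hS.2.2.2.2.2.2

end IsSphere2

namespace SC

variable [DecidableEq V] {K : SC V}

variable (K) in
def link (v : V) : Set V := {u | u ≠ v ∧ ({v, u} : Finset V) ∈ K.faces}

@[simp] theorem mem_link {u v : V} : u ∈ K.link v ↔ u ≠ v ∧ ({v, u} : Finset V) ∈ K.faces :=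
  Iff.rfl

theorem mem_link_comm {u v : V} : u ∈ K.link v ↔ v ∈ K.link u := by
  rw [mem_link, mem_link, Finset.pair_comm, ne_comm]

theorem vdeg_eq_ncard_link (v : V) : K.vdeg v = (K.link v).ncard := rfl

theorem pair_mem_of_mem {t : Finset V} (ht : t ∈ K.faces) {a b : V} (ha : a ∈ t) (hb : b ∈ t) :
    ({a, b} : Finset V) ∈ K.faces :=
  K.down_closed t ht _ (Finset.insert_subset ha (Finset.singleton_subset_iff.2 hb))

theorem mem_faces_of_forall_mem_link [Fintype V] (hS : IsSphere2 K) (hF : IsFlag K)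
    {s : Finset V} (hs : s.Nonempty) (h : ∀ u ∈ s, ∀ w ∈ s, u ≠ w → w ∈ K.link u) :
    s ∈ K.faces :=
  hF s hs (fun u _ => hS.singleton_mem u) fun u hu w hw huw => (h u hu w hw huw).2

theorem triangle_mem [Fintype V] (hS : IsSphere2 K) (hF : IsFlag K) {a b c : V}
    (hab : b ∈ K.link a) (hbc : c ∈ K.link b) (hca : a ∈ K.link c) :
    ({a, b, c} : Finset V) ∈ K.faces := by
  refine mem_faces_of_forall_mem_link hS hF (Finset.insert_nonempty _ _) ?_
  simp only [Finset.mem_insert, Finset.mem_singleton]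
  rintro u (rfl | rfl | rfl) w (rfl | rfl | rfl) huw <;>
    first | exact absurd rfl huw | assumption | exact mem_link_comm.1 ‹_›

theorem not_four_clique [Fintype V] (hS : IsSphere2 K) (hF : IsFlag K) {a b c d : V}
    (hab : b ∈ K.link a) (hac : c ∈ K.link a) (had : d ∈ K.link a)
    (hbc : c ∈ K.link b) (hbd : d ∈ K.link b) (hcd : d ∈ K.link c) : False := by
  have hface : ({a, b, c, d} : Finset V) ∈ K.faces := by
    refine mem_faces_of_forall_mem_link hS hF (Finset.insert_nonempty _ _) ?_
    simp only [Finset.mem_insert, Finset.mem_singleton]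
    rintro u (rfl | rfl | rfl | rfl) w (rfl | rfl | rfl | rfl) huw <;>
      first | exact absurd rfl huw | assumption | exact mem_link_comm.1 ‹_›
  have := hS.card_le_three hface
  rw [Finset.card_insert_of_notMem, Finset.card_insert_of_notMem, Finset.card_pair] at this
  · omega
  all_goals simp_all [ne_comm]

theorem ncard_link_inter_link [Fintype V] (hS : IsSphere2 K) (hF : IsFlag K) {a b : V}
    (hab : b ∈ K.link a) : (K.link a ∩ K.link b).ncard = 2 := by
  have himage : {t | t ∈ K.faces ∧ t.card = 3 ∧ {a, b} ⊆ t} =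
      (fun u => ({u, a, b} : Finset V)) '' (K.link a ∩ K.link b) := by
    ext t
    constructor
    · rintro ⟨ht, hcard, hsub⟩
      obtain ⟨w, rfl⟩ := Finset.exists_eq_insert_pair_of_card_eq_three hcard (hsub (by simp))
        (hsub (by simp)) hab.1.symm
      have hwa : w ≠ a := by rintro rfl; simp [Finset.card_pair hab.1.symm] at hcard
      have hwb : w ≠ b := by rintro rfl; simp [Finset.card_pair hab.1.symm] at hcard
      exact ⟨w, ⟨⟨hwa, pair_mem_of_mem ht (by simp) (by simp)⟩,
        ⟨hwb, pair_mem_of_mem ht (by simp) (by simp)⟩⟩, rfl⟩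
    · rintro ⟨u, ⟨hua, hub⟩, rfl⟩
      refine ⟨triangle_mem hS hF (mem_link_comm.1 hua) hab hub, ?_, by simp [Finset.subset_iff]⟩
      rw [Finset.card_insert_of_notMem (by simp [hua.1, hub.1]), Finset.card_pair hab.1.symm]
  have hinj : Set.InjOn (fun u => ({u, a, b} : Finset V)) (K.link a ∩ K.link b) := by
    rintro u ⟨hua, hub⟩ u' - h
    have : u ∈ ({u', a, b} : Finset V) := by
      rw [← show ({u, a, b} : Finset V) = {u', a, b} from h]; simp
    simpa [hua.1, hub.1] using this
  rw [← hinj.ncard_image, ← himage,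
    hS.ncard_triangles_superset hab.2 (Finset.card_pair hab.1.symm)]

variable (K) in
def inducedGraph (S : Set V) : SimpleGraph V where
  Adj u w := u ∈ S ∧ w ∈ S ∧ u ≠ w ∧ ({u, w} : Finset V) ∈ K.faces
  symm := ⟨fun u w h => ⟨h.2.1, h.1, h.2.2.1.symm, Finset.pair_comm u w ▸ h.2.2.2⟩⟩
  loopless := ⟨fun _ h => h.2.2.1 rfl⟩

@[simp] theorem inducedGraph_adj {S : Set V} {u w : V} :
    (K.inducedGraph S).Adj u w ↔ u ∈ S ∧ w ∈ S ∧ u ≠ w ∧ ({u, w} : Finset V) ∈ K.faces :=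
  Iff.rfl

theorem exists_cycle_of_ncard_neighborSet_eq_two [Finite V] {S : Set V} (hne : S.Nonempty)
    (h2 : ∀ u ∈ S, ((K.inducedGraph S).neighborSet u).ncard = 2)
    (hconn : ∀ u ∈ S, ∀ w ∈ S, (K.inducedGraph S).Reachable u w) :
    ∃ f : ZMod S.ncard → V, 3 ≤ S.ncard ∧ Function.Injective f ∧ Set.range f = S ∧
      (∀ i, ({f i, f (i + 1)} : Finset V) ∈ K.faces) ∧
      ∀ i j, i ≠ j → ({f i, f j} : Finset V) ∈ K.faces → j = i + 1 ∨ i = j + 1 := by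
  obtain ⟨v, hv⟩ := hne
  have hcyc : (K.inducedGraph S).IsCycles := fun u ⟨_, hw⟩ => h2 u hw.1
  have hsupp : ((K.inducedGraph S).connectedComponentMk v).supp = S := by
    ext w
    rw [SimpleGraph.ConnectedComponent.mem_supp_iff, SimpleGraph.ConnectedComponent.eq]
    refine ⟨fun ⟨p⟩ => ?_, fun hw => hconn w hw v hv⟩
    cases p with
    | nil => exact hv
    | cons h _ => exact h.1
  have := hcyc.exists_zmod_cycle (Set.nonempty_of_ncard_ne_zero (by rw [h2 v hv]; omega))
  rw [hsupp] at this
  obtain ⟨f, h3, hinj, hrange, hadj, hchord⟩ := this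
  have hmem : ∀ i, f i ∈ S := fun i => hrange ▸ Set.mem_range_self i
  refine ⟨f, h3, hinj, hrange, fun i => (hadj i).2.2.2, fun i j hij he => hchord i j ?_⟩
  exact ⟨hmem i, hmem j, hinj.ne hij, he⟩

section Link

theorem link_nonempty [Fintype V] (hS : IsSphere2 K) (v : V) : (K.link v).Nonempty := by
  obtain ⟨t, ht, hvt, hcard⟩ := hS.exists_triangle_superset (hS.singleton_mem v)
  obtain ⟨u, hu, huv⟩ := Finset.exists_mem_ne (by omega : 1 < t.card) v
  exact ⟨u, huv, pair_mem_of_mem ht (hvt (Finset.mem_singleton_self v)) hu⟩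

theorem neighborSet_inducedGraph_link {v u : V} (hu : u ∈ K.link v) :
    (K.inducedGraph (K.link v)).neighborSet u = K.link v ∩ K.link u := by
  ext w
  simp only [SimpleGraph.mem_neighborSet, inducedGraph_adj, Set.mem_inter_iff, mem_link]
  grind [mem_link]

theorem reachable_of_mem_triangle {v p q : V} {t : Finset V} (ht : t ∈ K.faces) (hv : v ∈ t)
    (hp : p ∈ t) (hq : q ∈ t) (hpv : p ≠ v) (hqv : q ≠ v) :
    (K.inducedGraph (K.link v)).Reachable p q := by
  rcases eq_or_ne p q with rfl | hpq
  · rfl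
  · exact SimpleGraph.Adj.reachable ⟨⟨hpv, pair_mem_of_mem ht hv hp⟩,
      ⟨hqv, pair_mem_of_mem ht hv hq⟩, hpq, pair_mem_of_mem ht hp hq⟩

theorem reachable_inducedGraph_link [Fintype V] (hS : IsSphere2 K) {v u w : V} (hu : u ∈ K.link v)
    (hw : w ∈ K.link v) : (K.inducedGraph (K.link v)).Reachable u w := by
  obtain ⟨t₀, ht₀, hsub₀, hc₀⟩ := hS.exists_triangle_superset hu.2
  obtain ⟨t₁, ht₁, hsub₁, hc₁⟩ := hS.exists_triangle_superset hw.2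
  have hv₀ : v ∈ t₀ := hsub₀ (Finset.mem_insert_self v _)
  have hchain := hS.reflTransGen_triangles ht₀ ht₁ hc₀ hc₁ hv₀ (hsub₁ (Finset.mem_insert_self v _))
  suffices ∀ p ∈ t₁, p ≠ v → (K.inducedGraph (K.link v)).Reachable u p from
    this w (hsub₁ (by simp)) hw.1
  clear ht₁ hc₁ hsub₁
  induction hchain with
  | refl => exact fun p hp hpv => reachable_of_mem_triangle ht₀ hv₀ (hsub₀ (by simp)) hp hu.1 hpv
  | @tail a b _ hab ih =>
    obtain ⟨-, hb, -, -, -, hvb, hcard⟩ := hab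
    obtain ⟨z, hz, hzv⟩ := Finset.exists_mem_ne (by omega : 1 < (a ∩ b).card) v
    rw [Finset.mem_inter] at hz
    exact fun p hp hpv => (ih z hz.1 hzv).trans (reachable_of_mem_triangle hb hvb hz.2 hp hzv hpv)

theorem vertexSurrounded [Fintype V] (hS : IsSphere2 K) (hF : IsFlag K) (v : V) :
    VertexSurrounded K v := by
  obtain ⟨f, h3, hinj, hrange, hedge, hchord⟩ := exists_cycle_of_ncard_neighborSet_eq_two
    (link_nonempty hS v)
    (fun u hu => by rw [neighborSet_inducedGraph_link hu, ncard_link_inter_link hS hF hu])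
    (fun u hu w hw => reachable_inducedGraph_link hS hu hw)
  have hmem : ∀ i, f i ∈ K.link v := fun i => hrange ▸ Set.mem_range_self i
  refine ⟨f, ⟨h3, hinj, hedge, hchord, fun i j l hij hjl hil hface => ?_⟩, hrange⟩
  have hlink : ∀ {x y}, x ≠ y → ({f x, f y} : Finset V) ⊆ {f i, f j, f l} →
      f y ∈ K.link (f x) := fun hxy hsub =>
    ⟨(hinj.ne hxy).symm, K.down_closed _ hface _ hsub⟩
  exact not_four_clique hS hF (hmem i) (hmem j) (hmem l) (hlink hij (by simp [Finset.subset_iff]))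
    (hlink hil (by simp [Finset.subset_iff])) (hlink hjl (by simp [Finset.subset_iff]))

end Link

section Belts

theorem isBelt_of_chordless {k : ℕ} (hk : 4 ≤ k) {f : ZMod k → V} (hinj : Function.Injective f)
    (hedge : ∀ i, ({f i, f (i + 1)} : Finset V) ∈ K.faces)
    (hchord : ∀ i j, i ≠ j → ({f i, f j} : Finset V) ∈ K.faces → j = i + 1 ∨ i = j + 1) :
    IsBelt K k f := by
  refine ⟨by omega, hinj, hedge, hchord, fun i j l hij hjl hil hface => ?_⟩
  exact ZMod.false_of_pairwise_adjacent hk hij hjl hil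
    (hchord i j hij (pair_mem_of_mem hface (by simp) (by simp)))
    (hchord j l hjl (pair_mem_of_mem hface (by simp) (by simp)))
    (hchord i l hil (pair_mem_of_mem hface (by simp) (by simp)))

theorem not_isBelt_three [Fintype V] (hS : IsSphere2 K) (hF : IsFlag K) (f : ZMod 3 → V) :
    ¬ IsBelt K 3 f := by
  rintro ⟨-, hinj, hedge, -, htri⟩
  have hlink : ∀ i, f (i + 1) ∈ K.link (f i) := fun i =>
    ⟨hinj.ne (by revert i; decide), hedge i⟩
  exact htri 0 1 2 (by decide) (by decide) (by decide)
    (triangle_mem hS hF (hlink 0) (hlink 1) (hlink 2))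

theorem five_le_vdeg [Fintype V] (hS : IsSphere2 K) (hP : IsPogorelov K) (v : V) :
    5 ≤ K.vdeg v := by
  obtain ⟨f, hf, -⟩ := vertexSurrounded hS hP.1 v
  have h3 := hf.1
  generalize K.vdeg v = k at f hf h3 ⊢
  by_contra! hk
  interval_cases k
  · exact not_isBelt_three hS hP.1 f hf
  · exact hP.2 ⟨f, hf⟩

theorem isBelt_four {x₀ x₁ x₂ x₃ : V} (h₀₁ : x₁ ∈ K.link x₀) (h₁₂ : x₂ ∈ K.link x₁)
    (h₂₃ : x₃ ∈ K.link x₂) (h₃₀ : x₀ ∈ K.link x₃) (h₀₂ : ({x₀, x₂} : Finset V) ∉ K.faces)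
    (h₁₃ : ({x₁, x₃} : Finset V) ∉ K.faces) : IsBelt K 4 ![x₀, x₁, x₂, x₃] := by
  have h₂₀ : ({x₂, x₀} : Finset V) ∉ K.faces := Finset.pair_comm x₀ x₂ ▸ h₀₂
  have h₃₁ : ({x₃, x₁} : Finset V) ∉ K.faces := Finset.pair_comm x₁ x₃ ▸ h₁₃
  have hne₀₂ : x₀ ≠ x₂ := by
    rintro rfl; exact h₀₂ (K.down_closed _ h₀₁.2 _ (by simp))
  have hne₁₃ : x₁ ≠ x₃ := by
    rintro rfl; exact h₁₃ (K.down_closed _ h₁₂.2 _ (by simp))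
  have := h₀₁.1; have := h₁₂.1; have := h₂₃.1; have := h₃₀.1
  refine isBelt_of_chordless le_rfl ?_ ?_ ?_
  · intro i j h
    fin_cases i <;> fin_cases j <;> first | rfl | simp_all [eq_comm]
  · intro i
    fin_cases i
    exacts [h₀₁.2, h₁₂.2, h₂₃.2, h₃₀.2]
  · have hidx : ∀ i j : ZMod 4, i ≠ j → (j = i + 1 ∨ i = j + 1) ∨
        (i = 0 ∧ j = 2) ∨ (i = 2 ∧ j = 0) ∨ (i = 1 ∧ j = 3) ∨ (i = 3 ∧ j = 1) := by decide
    intro i j hij hface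
    rcases hidx i j hij with h | ⟨rfl, rfl⟩ | ⟨rfl, rfl⟩ | ⟨rfl, rfl⟩ | ⟨rfl, rfl⟩
    exacts [h, absurd hface h₀₂, absurd hface h₂₀, absurd hface h₁₃, absurd hface h₃₁]

theorem mem_link_of_square (hB : ¬ HasBelt K 4) {u a m w : V} (hua : a ∈ K.link u)
    (ham : m ∈ K.link a) (hmw : w ∈ K.link m) (hwu : u ∈ K.link w)
    (hum : ({u, m} : Finset V) ∉ K.faces) (hwa : w ≠ a) : w ∈ K.link a := by
  by_contra h
  exact hB ⟨_, isBelt_four hua ham hmw hwu hum fun h' => h ⟨hwa, h'⟩⟩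

theorem reachable_of_isBelt {k : ℕ} {f : ZMod k → V} (hf : IsBelt K k f) {S : Set V}
    (j : ZMod k) (hsub : ∀ x ∈ Set.range f, x ≠ f j → x ≠ f (j + 1) → x ∈ S) {u w : V}
    (hu : u ∈ Set.range f) (hu₀ : u ≠ f j) (hu₁ : u ≠ f (j + 1)) (hw : w ∈ Set.range f)
    (hw₀ : w ≠ f j) (hw₁ : w ≠ f (j + 1)) : (K.inducedGraph S).Reachable u w := by
  obtain ⟨hk, hinj, hedge, -, -⟩ := hf
  have : NeZero k := ⟨by omega⟩
  have hmem : ∀ t : ℕ, t + 2 < k → f (j + 2 + t) ∈ S := fun t ht =>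
    have hoff := ZMod.ne_and_ne_add_one_iff.2 ⟨t, ht, rfl⟩
    hsub _ ⟨_, rfl⟩ (hinj.ne hoff.1) (hinj.ne hoff.2)
  have hpath : ∀ t : ℕ, t + 2 < k →
      (K.inducedGraph S).Reachable (f (j + 2)) (f (j + 2 + t)) := by
    intro t
    induction t with
    | zero => intro _; simp
    | succ t ih =>
      intro ht
      have hsucc : j + 2 + ((t + 1 : ℕ) : ZMod k) = j + 2 + t + 1 := by push_cast; ring
      have h1 : (1 : ZMod k) ≠ 0 := by
        simpa using ZMod.natCast_ne_zero_of_lt (k := k) (c := 1) (by omega) (by omega)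
      refine (ih (by omega)).trans (SimpleGraph.Adj.reachable ?_)
      rw [hsucc]
      exact ⟨hmem t (by omega), hsucc ▸ hmem (t + 1) ht, hinj.ne (by simpa using h1), hedge _⟩
  have hindex : ∀ {x}, x ∈ Set.range f → x ≠ f j → x ≠ f (j + 1) →
      ∃ t : ℕ, t + 2 < k ∧ x = f (j + 2 + t) := by
    rintro _ ⟨i, rfl⟩ h₀ h₁
    obtain ⟨t, ht, rfl⟩ := ZMod.ne_and_ne_add_one_iff.1 ⟨fun h => h₀ (congrArg f h),
      fun h => h₁ (congrArg f h)⟩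
    exact ⟨t, ht, rfl⟩
  obtain ⟨t, ht, rfl⟩ := hindex hu hu₀ hu₁
  obtain ⟨t', ht', rfl⟩ := hindex hw hw₀ hw₁
  exact (hpath t ht).symm.trans (hpath t' ht')

end Belts

section Euler

theorem vdeg_eq_ncard_edges (v : V) :
    K.vdeg v = {e | e ∈ K.faces ∧ e.card = 2 ∧ v ∈ e}.ncard := by
  have himage : {e | e ∈ K.faces ∧ e.card = 2 ∧ v ∈ e} =
      (fun u => ({v, u} : Finset V)) '' K.link v := by
    ext e
    simp only [Set.mem_ofPred_eq, Set.mem_image, mem_link]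
    constructor
    · rintro ⟨he, hcard, hv⟩
      obtain ⟨x, y, hxy, rfl⟩ := Finset.card_eq_two.1 hcard
      rcases Finset.mem_insert.1 hv with rfl | hv
      · exact ⟨y, ⟨hxy.symm, he⟩, rfl⟩
      · obtain rfl := Finset.mem_singleton.1 hv
        exact ⟨x, ⟨hxy, Finset.pair_comm x v ▸ he⟩, Finset.pair_comm v x⟩
    · rintro ⟨u, ⟨huv, hu⟩, rfl⟩
      exact ⟨hu, Finset.card_pair huv.symm, Finset.mem_insert_self v _⟩
  have hinj : Set.InjOn (fun u => ({v, u} : Finset V)) (K.link v) := by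
    rintro u hu u' - h
    have : u ∈ ({v, u'} : Finset V) := by
      rw [← show ({v, u} : Finset V) = {v, u'} from h]; simp
    simpa [hu.1] using this
  rw [vdeg_eq_ncard_link, ← hinj.ncard_image, ← himage]

variable (K) in
theorem sum_vdeg [Fintype V] :
    ∑ v, K.vdeg v = 2 * {e | e ∈ K.faces ∧ e.card = 2}.ncard := by
  classical
  set E := Finset.univ.filter fun e : Finset V => e ∈ K.faces ∧ e.card = 2
  calc ∑ v, K.vdeg v = ∑ v, (E.filter (v ∈ ·)).card := Finset.sum_congr rfl fun v _ => by
        rw [vdeg_eq_ncard_edges, ← Set.ncard_coe_finset]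
        simp [E, and_assoc]
    _ = ∑ e ∈ E, (Finset.univ.filter (· ∈ e)).card :=
      Finset.sum_card_bipartiteAbove_eq_sum_card_bipartiteBelow _
    _ = ∑ e ∈ E, 2 := Finset.sum_congr rfl fun e he => by
      rw [Finset.filter_mem_eq_inter, Finset.univ_inter]
      exact (Finset.mem_filter.1 he).2.2
    _ = 2 * {e | e ∈ K.faces ∧ e.card = 2}.ncard := by
      rw [Finset.sum_const, smul_eq_mul, mul_comm, ← Set.ncard_coe_finset]
      simp [E]

theorem three_mul_ncard_triangles [Fintype V] (hS : IsSphere2 K) :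
    3 * {t | t ∈ K.faces ∧ t.card = 3}.ncard = 2 * {e | e ∈ K.faces ∧ e.card = 2}.ncard := by
  classical
  set E := Finset.univ.filter fun e : Finset V => e ∈ K.faces ∧ e.card = 2
  set T := Finset.univ.filter fun t : Finset V => t ∈ K.faces ∧ t.card = 3
  have hT : ∀ t ∈ T, (E.filter (· ⊆ t)).card = 3 := by
    intro t ht
    obtain ⟨ht, hcard⟩ := (Finset.mem_filter.1 ht).2
    have : E.filter (· ⊆ t) = t.powersetCard 2 := by
      ext e
      simp only [E, Finset.mem_filter, Finset.mem_univ, true_and, Finset.mem_powersetCard]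
      exact ⟨fun ⟨⟨_, h2⟩, hsub⟩ => ⟨hsub, h2⟩,
        fun ⟨hsub, h2⟩ => ⟨⟨K.down_closed t ht e hsub, h2⟩, hsub⟩⟩
    rw [this, Finset.card_powersetCard, hcard]
    rfl
  have hE : ∀ e ∈ E, (T.filter (e ⊆ ·)).card = 2 := by
    intro e he
    obtain ⟨he, hcard⟩ := (Finset.mem_filter.1 he).2
    rw [← hS.ncard_triangles_superset he hcard, ← Set.ncard_coe_finset]
    congr 1
    ext t
    simp [T, and_assoc]
  have hcount := Finset.sum_card_bipartiteAbove_eq_sum_card_bipartiteBelow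
    (fun (t : Finset V) (e : Finset V) => e ⊆ t) (s := T) (t := E)
  simp only [Finset.bipartiteAbove, Finset.bipartiteBelow] at hcount
  rw [Finset.sum_congr rfl hT, Finset.sum_congr rfl hE, Finset.sum_const, Finset.sum_const,
    smul_eq_mul, smul_eq_mul] at hcount
  have hEcard : {e | e ∈ K.faces ∧ e.card = 2}.ncard = E.card := by
    rw [← Set.ncard_coe_finset]; simp [E]
  have hTcard : {t | t ∈ K.faces ∧ t.card = 3}.ncard = T.card := by
    rw [← Set.ncard_coe_finset]; simp [T]
  omega

theorem ncard_vertices [Fintype V] (hS : IsSphere2 K) :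
    {s | s ∈ K.faces ∧ s.card = 1}.ncard = Fintype.card V := by
  have : {s | s ∈ K.faces ∧ s.card = 1} = Set.range fun v : V => ({v} : Finset V) := by
    ext s
    refine ⟨fun ⟨_, hs⟩ => ?_, ?_⟩
    · obtain ⟨v, rfl⟩ := Finset.card_eq_one.1 hs
      exact ⟨v, rfl⟩
    · rintro ⟨v, rfl⟩
      exact ⟨hS.singleton_mem v, Finset.card_singleton v⟩
  rw [this, Set.ncard_range_of_injective Finset.singleton_injective, Nat.card_eq_fintype_card]

-- Euler's formula with `3T = 2E` gives `E = 3V - 6`, so the average degree `2E / V` is below 6.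
theorem exists_vdeg_le_five [Fintype V] (hS : IsSphere2 K) : ∃ v, K.vdeg v ≤ 5 := by
  by_contra! h
  have hsum : 6 * Fintype.card V ≤ ∑ v, K.vdeg v := by
    rw [mul_comm, ← smul_eq_mul, ← Finset.card_univ, ← Finset.sum_const]
    exact Finset.sum_le_sum fun v _ => h v
  have := hS.euler
  have := three_mul_ncard_triangles hS
  rw [sum_vdeg, ← ncard_vertices hS] at hsum
  omega

end Euler

section Surround

variable (K) in
def surround (a b c : V) : Set V :=
  (K.link a \ {b, c}) ∪ (K.link b \ {c, a}) ∪ (K.link c \ {a, b})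

theorem surround_rotate (a b c : V) : K.surround b c a = K.surround a b c := by
  simp only [surround, Set.union_assoc, Set.union_comm (K.link a \ {b, c})]

theorem mem_surround {a b c u : V} : u ∈ K.surround a b c ↔
    (u ∈ K.link a ∨ u ∈ K.link b ∨ u ∈ K.link c) ∧ u ≠ a ∧ u ≠ b ∧ u ≠ c := by
  simp only [surround, Set.mem_union, Set.mem_sdiff, Set.mem_insert_iff, Set.mem_singleton_iff]
  grind [mem_link]

theorem surround_eq_setOf (a b c : V) : K.surround a b c = {w | w ≠ a ∧ w ≠ b ∧ w ≠ c ∧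
    (({w, a} : Finset V) ∈ K.faces ∨ ({w, b} : Finset V) ∈ K.faces ∨
      ({w, c} : Finset V) ∈ K.faces)} := by
  ext w
  simp only [mem_surround, mem_link, Set.mem_ofPred_eq, Finset.pair_comm w]
  tauto

theorem mem_surround_of_mem_link {a b c u : V} (hu : u ∈ K.link a) (hub : u ≠ b) (huc : u ≠ c) :
    u ∈ K.surround a b c :=
  Or.inl (Or.inl ⟨hu, by rintro (h | h) <;> contradiction⟩)

theorem reachable_surround_of_mem_link [Fintype V] (hS : IsSphere2 K) (hF : IsFlag K) {a b c : V}
    (hab : b ∈ K.link a) (hbc : c ∈ K.link b) (hca : a ∈ K.link c) {u w : V}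
    (hu : u ∈ K.link a) (hub : u ≠ b) (huc : u ≠ c) (hw : w ∈ K.link a) (hwb : w ≠ b)
    (hwc : w ≠ c) : (K.inducedGraph (K.surround a b c)).Reachable u w := by
  obtain ⟨f, hf, hrange⟩ := vertexSurrounded hS hF a
  change Set.range f = K.link a at hrange
  have hsub : ∀ x ∈ Set.range f, x ≠ b → x ≠ c → x ∈ K.surround a b c := fun x hx =>
    mem_surround_of_mem_link (hrange ▸ hx)
  obtain ⟨j, rfl⟩ : b ∈ Set.range f := hrange ▸ hab
  obtain ⟨j', rfl⟩ : c ∈ Set.range f := hrange ▸ mem_link_comm.1 hca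
  rw [← hrange] at hu hw
  rcases hf.2.2.2.1 j j' (fun h => hbc.1 (congrArg f h).symm) hbc.2 with rfl | rfl
  · exact reachable_of_isBelt hf j hsub hu hub huc hw hwb hwc
  · exact reachable_of_isBelt hf j' (fun x hx h₀ h₁ => hsub x hx h₁ h₀) hu huc hub hw hwc hwb

theorem exists_mem_link_inter_link_ne [Fintype V] (hS : IsSphere2 K) (hF : IsFlag K)
    {a b : V} (hab : b ∈ K.link a) (c : V) : ∃ w ∈ K.link a ∩ K.link b, w ≠ c :=
  Set.exists_ne_of_one_lt_ncard (by rw [ncard_link_inter_link hS hF hab]; norm_num) c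

theorem reachable_surround [Fintype V] (hS : IsSphere2 K) (hF : IsFlag K) {a b c : V}
    (hab : b ∈ K.link a) (hbc : c ∈ K.link b) (hca : a ∈ K.link c) {u w : V}
    (hu : u ∈ K.surround a b c) (hw : w ∈ K.surround a b c) :
    (K.inducedGraph (K.surround a b c)).Reachable u w := by
  obtain ⟨x, ⟨hxa, hxb⟩, hxc⟩ := exists_mem_link_inter_link_ne hS hF hab c
  obtain ⟨y, ⟨hyc, hya⟩, hyb⟩ := exists_mem_link_inter_link_ne hS hF hca b
  have hreach : ∀ {u}, u ∈ K.surround a b c →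
      (K.inducedGraph (K.surround a b c)).Reachable u x := by
    intro u hu
    obtain ⟨hua | hub | huc, hua', hub', huc'⟩ := mem_surround.1 hu
    · exact reachable_surround_of_mem_link hS hF hab hbc hca hua hub' huc' hxa hxb.1 hxc
    · rw [← surround_rotate]
      exact reachable_surround_of_mem_link hS hF hbc hca hab hub huc' hua' hxb hxc hxa.1
    · rw [← surround_rotate, ← surround_rotate]
      refine (reachable_surround_of_mem_link hS hF hca hab hbc huc hua' hub' hyc hya.1 hyb).trans ?_
      rw [surround_rotate, surround_rotate]
      exact reachable_surround_of_mem_link hS hF hab hbc hca hya hyb hyc.1 hxa hxb.1 hxc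
  exact (hreach hu).trans (hreach hw).symm

theorem neighborSet_surround_of_mem_link_of_notMem (hB : ¬ HasBelt K 4) {a b c : V}
    (hab : b ∈ K.link a) (hca : a ∈ K.link c) {u : V} (hu : u ∈ K.surround a b c)
    (hua : u ∈ K.link a) (hub : u ∉ K.link b) (huc : u ∉ K.link c) :
    (K.inducedGraph (K.surround a b c)).neighborSet u = K.link a ∩ K.link u := by
  obtain ⟨-, -, hub', huc'⟩ := mem_surround.1 hu
  ext w
  simp only [SimpleGraph.mem_neighborSet, inducedGraph_adj, Set.mem_inter_iff]
  constructor
  · rintro ⟨-, hw, huw, he⟩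
    have hwu : w ∈ K.link u := ⟨huw.symm, he⟩
    obtain ⟨hwa | hwb | hwc, hwa', -, -⟩ := mem_surround.1 hw
    · exact ⟨hwa, hwu⟩
    · exact ⟨mem_link_of_square hB (mem_link_comm.1 hua) hab hwb (mem_link_comm.1 hwu)
        (fun h => hub (mem_link_comm.1 ⟨hub'.symm, h⟩)) hwa', hwu⟩
    · exact ⟨mem_link_of_square hB (mem_link_comm.1 hua) (mem_link_comm.1 hca) hwc
        (mem_link_comm.1 hwu) (fun h => huc (mem_link_comm.1 ⟨huc'.symm, h⟩)) hwa', hwu⟩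
  · rintro ⟨hwa, hwu⟩
    refine ⟨hu, mem_surround_of_mem_link hwa ?_ ?_, hwu.1.symm, hwu.2⟩
    · rintro rfl; exact hub (mem_link_comm.1 hwu)
    · rintro rfl; exact huc (mem_link_comm.1 hwu)

theorem ncard_neighborSet_surround_of_mem_link_of_notMem [Fintype V] (hS : IsSphere2 K)
    (hP : IsPogorelov K) {a b c : V} (hab : b ∈ K.link a) (hca : a ∈ K.link c) {u : V}
    (hu : u ∈ K.surround a b c) (hua : u ∈ K.link a) (hub : u ∉ K.link b)
    (huc : u ∉ K.link c) : ((K.inducedGraph (K.surround a b c)).neighborSet u).ncard = 2 := by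
  rw [neighborSet_surround_of_mem_link_of_notMem hP.2 hab hca hu hua hub huc,
    ncard_link_inter_link hS hP.1 hua]

theorem neighborSet_surround_of_mem_link_of_mem_link (hB : ¬ HasBelt K 4)
    {a b c : V} (hca : a ∈ K.link c) {u x y : V} (hu : u ∈ K.surround a b c)
    (hua : u ∈ K.link a) (huc : u ∉ K.link c) (hx : K.link a ∩ K.link u = {b, x}) (hxb : x ≠ b)
    (hy : K.link b ∩ K.link u = {a, y}) (hya : y ≠ a) :
    (K.inducedGraph (K.surround a b c)).neighborSet u = {x, y} := by
  obtain ⟨-, -, -, huc'⟩ := mem_surround.1 hu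
  have hxa : x ∈ K.link a ∩ K.link u := hx ▸ Or.inr rfl
  have hyb : y ∈ K.link b ∩ K.link u := hy ▸ Or.inr rfl
  have hnotc : ∀ {w}, w ∈ K.link u → w ≠ c := by
    rintro w hw rfl; exact huc (mem_link_comm.1 hw)
  ext w
  simp only [SimpleGraph.mem_neighborSet, inducedGraph_adj, Set.mem_insert_iff,
    Set.mem_singleton_iff]
  constructor
  · rintro ⟨-, hw, huw, he⟩
    have hwu : w ∈ K.link u := ⟨huw.symm, he⟩
    obtain ⟨hwa | hwb | hwc, hwa', hwb', -⟩ := mem_surround.1 hw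
    · have : w ∈ K.link a ∩ K.link u := ⟨hwa, hwu⟩
      rw [hx] at this
      exact Or.inl (this.resolve_left hwb')
    · have : w ∈ K.link b ∩ K.link u := ⟨hwb, hwu⟩
      rw [hy] at this
      exact Or.inr (this.resolve_left hwa')
    · have : w ∈ K.link a ∩ K.link u :=
        ⟨mem_link_of_square hB (mem_link_comm.1 hua) (mem_link_comm.1 hca) hwc
          (mem_link_comm.1 hwu) (fun h => huc (mem_link_comm.1 ⟨huc'.symm, h⟩)) hwa', hwu⟩
      rw [hx] at this
      exact Or.inl (this.resolve_left hwb')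
  · rintro (rfl | rfl)
    · exact ⟨hu, mem_surround_of_mem_link hxa.1 hxb (hnotc hxa.2), hxa.2.1.symm, hxa.2.2⟩
    · refine ⟨hu, ?_, hyb.2.1.symm, hyb.2.2⟩
      rw [← surround_rotate]
      exact mem_surround_of_mem_link hyb.1 (hnotc hyb.2) hya

theorem ncard_neighborSet_surround_of_mem_link_of_mem_link [Fintype V] (hS : IsSphere2 K)
    (hP : IsPogorelov K) {a b c : V} (hab : b ∈ K.link a) (hca : a ∈ K.link c) {u : V}
    (hu : u ∈ K.surround a b c) (hua : u ∈ K.link a) (hub : u ∈ K.link b)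
    (huc : u ∉ K.link c) : ((K.inducedGraph (K.surround a b c)).neighborSet u).ncard = 2 := by
  obtain ⟨x, hxb, hx⟩ := Set.exists_eq_pair_of_ncard_eq_two
    (ncard_link_inter_link hS hP.1 hua) (a := b) ⟨hab, mem_link_comm.1 hub⟩
  obtain ⟨y, hya, hy⟩ := Set.exists_eq_pair_of_ncard_eq_two
    (ncard_link_inter_link hS hP.1 hub) (a := a) ⟨mem_link_comm.1 hab, mem_link_comm.1 hua⟩
  have hxy : x ≠ y := by
    rintro rfl
    have hxa : x ∈ K.link a ∩ K.link u := hx ▸ Or.inr rfl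
    have hxb : x ∈ K.link b ∩ K.link u := hy ▸ Or.inr rfl
    exact not_four_clique hS hP.1 hab hua hxa.1 hub hxb.1 hxa.2
  rw [neighborSet_surround_of_mem_link_of_mem_link hP.2 hca hu hua huc hx hxb hy hya,
    Set.ncard_pair hxy]

theorem ncard_neighborSet_surround [Fintype V] (hS : IsSphere2 K) (hP : IsPogorelov K)
    {a b c : V} (hab : b ∈ K.link a) (hbc : c ∈ K.link b) (hca : a ∈ K.link c) {u : V}
    (hu : u ∈ K.surround a b c) :
    ((K.inducedGraph (K.surround a b c)).neighborSet u).ncard = 2 := by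
  have hu₁ : u ∈ K.surround b c a := by rwa [surround_rotate]
  have hu₂ : u ∈ K.surround c a b := by rwa [surround_rotate, surround_rotate]
  obtain ⟨hmem, -⟩ := mem_surround.1 hu
  by_cases ha : u ∈ K.link a <;> by_cases hb : u ∈ K.link b <;> by_cases hc : u ∈ K.link c
  · exact (not_four_clique hS hP.1 hab (mem_link_comm.1 hca) ha hbc hb hc).elim
  · exact ncard_neighborSet_surround_of_mem_link_of_mem_link hS hP hab hca hu ha hb hc
  · rw [← surround_rotate, ← surround_rotate]
    exact ncard_neighborSet_surround_of_mem_link_of_mem_link hS hP hca hbc hu₂ hc ha hb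
  · exact ncard_neighborSet_surround_of_mem_link_of_notMem hS hP hab hca hu ha hb hc
  · rw [← surround_rotate]
    exact ncard_neighborSet_surround_of_mem_link_of_mem_link hS hP hbc hab hu₁ hb hc ha
  · rw [← surround_rotate]
    exact ncard_neighborSet_surround_of_mem_link_of_notMem hS hP hbc hab hu₁ hb hc ha
  · rw [← surround_rotate, ← surround_rotate]
    exact ncard_neighborSet_surround_of_mem_link_of_notMem hS hP hca hbc hu₂ hc ha hb
  · exact absurd hmem (by tauto)

theorem ncard_link_sdiff_pair [Finite V] {a b c : V} (hb : b ∈ K.link a) (hc : c ∈ K.link a)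
    (hbc : b ≠ c) : (K.link a \ {b, c}).ncard + 2 = K.vdeg a := by
  rw [vdeg_eq_ncard_link, ← Set.ncard_pair hbc]
  exact Set.ncard_sdiff_add_ncard_of_subset (Set.insert_subset hb (Set.singleton_subset_iff.2 hc))

theorem ncard_link_sdiff_inter_link_sdiff [Fintype V] (hS : IsSphere2 K) (hF : IsFlag K)
    {a b c : V} (hab : b ∈ K.link a) (hbc : c ∈ K.link b) (hca : a ∈ K.link c) :
    ((K.link a \ {b, c}) ∩ (K.link b \ {c, a})).ncard = 1 := by
  have : (K.link a \ {b, c}) ∩ (K.link b \ {c, a}) = (K.link a ∩ K.link b) \ {c} := by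
    ext u
    simp only [Set.mem_inter_iff, Set.mem_sdiff, Set.mem_insert_iff, Set.mem_singleton_iff]
    grind [mem_link]
  rw [this, Set.ncard_sdiff_singleton_of_mem
    (show c ∈ K.link a ∩ K.link b from ⟨mem_link_comm.1 hca, hbc⟩),
    ncard_link_inter_link hS hF hab]

theorem ncard_surround [Fintype V] (hS : IsSphere2 K) (hF : IsFlag K) {a b c : V}
    (hab : b ∈ K.link a) (hbc : c ∈ K.link b) (hca : a ∈ K.link c) :
    (K.surround a b c).ncard + 9 = K.vdeg a + K.vdeg b + K.vdeg c := by
  set A := K.link a \ {b, c}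
  set B := K.link b \ {c, a}
  set C := K.link c \ {a, b}
  have hA : A.ncard + 2 = K.vdeg a := ncard_link_sdiff_pair hab (mem_link_comm.1 hca) hbc.1.symm
  have hB : B.ncard + 2 = K.vdeg b := ncard_link_sdiff_pair hbc (mem_link_comm.1 hab) hca.1.symm
  have hC : C.ncard + 2 = K.vdeg c := ncard_link_sdiff_pair hca (mem_link_comm.1 hbc) hab.1.symm
  have hAB : (A ∩ B).ncard = 1 := ncard_link_sdiff_inter_link_sdiff hS hF hab hbc hca
  have hBC : (B ∩ C).ncard = 1 := ncard_link_sdiff_inter_link_sdiff hS hF hbc hca hab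
  have hCA : (C ∩ A).ncard = 1 := ncard_link_sdiff_inter_link_sdiff hS hF hca hab hbc
  have hABC : (C ∩ A) ∩ (B ∩ C) = ∅ := Set.eq_empty_of_forall_notMem fun _ ⟨⟨hc, ha⟩, hb, _⟩ =>
    not_four_clique hS hF hab (mem_link_comm.1 hca) ha.1 hbc hb.1 hc.1
  have hdistrib : (A ∪ B) ∩ C = (C ∩ A) ∪ (B ∩ C) := by
    rw [Set.union_inter_distrib_right, Set.inter_comm A]
  have h₁ := Set.ncard_union_add_ncard_inter A B
  have h₂ := Set.ncard_union_add_ncard_inter (A ∪ B) C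
  have h₃ := Set.ncard_union_add_ncard_inter (C ∩ A) (B ∩ C)
  rw [hdistrib] at h₂
  rw [hABC, Set.ncard_empty] at h₃
  change (A ∪ B ∪ C).ncard + 9 = _
  omega

theorem exists_isBelt_surround [Fintype V] (hS : IsSphere2 K) (hP : IsPogorelov K) {a b c : V}
    (hab : b ∈ K.link a) (hbc : c ∈ K.link b) (hca : a ∈ K.link c) :
    ∃ g : ZMod (K.surround a b c).ncard → V,
      IsBelt K (K.surround a b c).ncard g ∧ Set.range g = K.surround a b c := by
  obtain ⟨x, ⟨hxa, hxb⟩, hxc⟩ := exists_mem_link_inter_link_ne hS hP.1 hab c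
  obtain ⟨g, -, hinj, hrange, hedge, hchord⟩ := exists_cycle_of_ncard_neighborSet_eq_two
    ⟨x, mem_surround_of_mem_link hxa hxb.1 hxc⟩
    (fun u hu => ncard_neighborSet_surround hS hP hab hbc hca hu)
    (fun u hu w hw => reachable_surround hS hP.1 hab hbc hca hu hw)
  have := ncard_surround hS hP.1 hab hbc hca
  have := five_le_vdeg hS hP a
  have := five_le_vdeg hS hP b
  have := five_le_vdeg hS hP c
  exact ⟨g, isBelt_of_chordless (by omega) hinj hedge hchord, hrange⟩

end Surround

end SC

section Labelling

-- `beltLabel l n` maps `[0, l + n - 4)` bijectively onto `[4, l + n - 1]`, so any belt `g`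
-- around the triangle can be numbered as required by transporting it along this bijection.
def beltLabelInv (l n q : ℕ) : ℕ :=
  if q = 4 then 0
  else if q = 5 then l - 3
  else if q = 6 then l + n - 6
  else if q = 7 then l + n - 5
  else if q ≤ l + 3 then q - 7
  else q - 6

variable {l n : ℕ}

theorem four_le_beltLabel (p : ℕ) : 4 ≤ beltLabel l n p := by
  unfold beltLabel; split_ifs <;> omega

theorem beltLabelInv_beltLabel (hl : 5 ≤ l) {p : ℕ} (hp : p < l + n - 4) :
    beltLabelInv l n (beltLabel l n p) = p := by
  unfold beltLabel beltLabelInv; split_ifs <;> omega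

theorem beltLabelInv_lt (hn : 5 ≤ n) {q : ℕ} (hq : 4 ≤ q) (hq' : q ≤ l + n - 1) :
    beltLabelInv l n q < l + n - 4 := by
  unfold beltLabelInv; split_ifs <;> omega

theorem beltLabel_beltLabelInv (hl : 5 ≤ l) (hn : 5 ≤ n) {q : ℕ} (hq : 4 ≤ q)
    (hq' : q ≤ l + n - 1) : beltLabel l n (beltLabelInv l n q) = q := by
  unfold beltLabel beltLabelInv; split_ifs <;> omega

def beltLabelling (l n : ℕ) (x₁ x₂ x₃ : V) (g : ZMod (l + n - 4) → V) (p : ℕ) : V :=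
  if p = 1 then x₁ else if p = 2 then x₂ else if p = 3 then x₃ else g (beltLabelInv l n p)

variable {x₁ x₂ x₃ : V} {g : ZMod (l + n - 4) → V}

theorem beltLabelling_of_four_le {p : ℕ} (hp : 4 ≤ p) :
    beltLabelling l n x₁ x₂ x₃ g p = g (beltLabelInv l n p) := by
  simp only [beltLabelling, if_neg (by omega : p ≠ 1), if_neg (by omega : p ≠ 2),
    if_neg (by omega : p ≠ 3)]

theorem beltLabelling_beltLabel (hl : 5 ≤ l) (hn : 5 ≤ n) (p : ZMod (l + n - 4)) :
    beltLabelling l n x₁ x₂ x₃ g (beltLabel l n p.val) = g p := by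
  have : NeZero (l + n - 4) := ⟨by omega⟩
  rw [beltLabelling_of_four_le (four_le_beltLabel _), beltLabelInv_beltLabel hl p.val_lt,
    ZMod.natCast_zmod_val]

theorem injOn_beltLabelling (hl : 5 ≤ l) (hn : 5 ≤ n) (hg : Function.Injective g)
    (h₁₂ : x₁ ≠ x₂) (h₁₃ : x₁ ≠ x₃) (h₂₃ : x₂ ≠ x₃) (hx : ∀ i, g i ∉ ({x₁, x₂, x₃} : Set V)) :
    Set.InjOn (beltLabelling l n x₁ x₂ x₃ g) (Set.Icc 1 (l + n - 1)) := by
  have hsmall : ∀ p, 1 ≤ p → p < 4 → beltLabelling l n x₁ x₂ x₃ g p ∈ ({x₁, x₂, x₃} : Set V) := by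
    intro p hp hp'
    interval_cases p <;> simp [beltLabelling]
  rintro p ⟨hp, hp'⟩ q ⟨hq, hq'⟩ h
  rcases lt_or_ge p 4 with hp4 | hp4 <;> rcases lt_or_ge q 4 with hq4 | hq4
  · interval_cases p <;> interval_cases q <;> simp_all [beltLabelling]
  · exact absurd (h ▸ hsmall p hp hp4) (beltLabelling_of_four_le hq4 ▸ hx _)
  · exact absurd (h ▸ hsmall q hq hq4) (beltLabelling_of_four_le hp4 ▸ hx _)
  · rw [beltLabelling_of_four_le hp4, beltLabelling_of_four_le hq4] at h
    have hval := congrArg ZMod.val (hg h)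
    rw [ZMod.val_cast_of_lt (beltLabelInv_lt hn hp4 hp'),
      ZMod.val_cast_of_lt (beltLabelInv_lt hn hq4 hq')] at hval
    rw [← beltLabel_beltLabelInv hl hn hp4 hp', hval, beltLabel_beltLabelInv hl hn hq4 hq']

end Labelling

/-- For any Pogorelov polytope `P` (encoded by its dual simplicial 2-sphere `K`)
there exist `n, l ≥ 5` and pairwise distinct facets `F 1, …, F (l+n-1)` such that
`F 1, F 2, F 3` pairwise intersect in a common vertex (`{F 1, F 2, F 3}` is a
2-simplex of `K`), `|F 1| = 5`, `|F 2| = l`, `|F 3| = n`, and the remaining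
`l + n - 4` facets, in the order `(F 4, F 8, …, F (l+3), F 5, F (l+4), …,
F (l+n-1), F 6, F 7)`, form a belt consisting exactly of the facets adjacent to
`F 1 ∪ F 2 ∪ F 3` and surrounding this triple. -/
theorem stmt11 {V : Type} [DecidableEq V] [Fintype V] (K : SC V) (hS : IsSphere2 K)
    (hP : IsPogorelov K) :
    ∃ l n : ℕ, 5 ≤ l ∧ 5 ≤ n ∧
      ∃ F : ℕ → V,
        Set.InjOn F (Set.Icc 1 (l + n - 1)) ∧
        (∀ i ∈ Set.Icc 1 (l + n - 1), ({F i} : Finset V) ∈ K.faces) ∧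
        ({F 1, F 2, F 3} : Finset V) ∈ K.faces ∧
        K.vdeg (F 1) = 5 ∧ K.vdeg (F 2) = l ∧ K.vdeg (F 3) = n ∧
        ∃ g : ZMod (l + n - 4) → V,
          IsBelt K (l + n - 4) g ∧
          Set.range g = {w | w ≠ F 1 ∧ w ≠ F 2 ∧ w ≠ F 3 ∧
            (({w, F 1} : Finset V) ∈ K.faces ∨ ({w, F 2} : Finset V) ∈ K.faces ∨
              ({w, F 3} : Finset V) ∈ K.faces)} ∧
          ∀ p : ZMod (l + n - 4), g p = F (beltLabel l n p.val) := by
  obtain ⟨v₁, hv₁⟩ := SC.exists_vdeg_le_five hS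
  have hdeg₁ : K.vdeg v₁ = 5 := le_antisymm hv₁ (SC.five_le_vdeg hS hP v₁)
  obtain ⟨v₂, h₁₂⟩ := SC.link_nonempty hS v₁
  obtain ⟨v₃, h₁₃, h₂₃⟩ := Set.nonempty_of_ncard_ne_zero
    (by rw [SC.ncard_link_inter_link hS hP.1 h₁₂]; norm_num)
  have h₃₁ := SC.mem_link_comm.1 h₁₃
  have hl := SC.five_le_vdeg hS hP v₂
  have hn := SC.five_le_vdeg hS hP v₃
  have hbelt := SC.exists_isBelt_surround hS hP h₁₂ h₂₃ h₃₁
  rw [show (K.surround v₁ v₂ v₃).ncard = K.vdeg v₂ + K.vdeg v₃ - 4 by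
    have := SC.ncard_surround hS hP.1 h₁₂ h₂₃ h₃₁; omega] at hbelt
  obtain ⟨g, hg, hrange⟩ := hbelt
  refine ⟨_, _, hl, hn, beltLabelling _ _ v₁ v₂ v₃ g, injOn_beltLabelling hl hn hg.2.1 h₁₂.1.symm
    h₃₁.1 h₂₃.1.symm fun i => ?_, fun i _ => hS.singleton_mem _,
    SC.triangle_mem hS hP.1 h₁₂ h₂₃ h₃₁, hdeg₁, rfl, rfl, g, hg, ?_,
    fun p => (beltLabelling_beltLabel hl hn p).symm⟩
  · have := hrange ▸ Set.mem_range_self i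
    simp only [SC.mem_surround] at this
    simp only [Set.mem_insert_iff, Set.mem_singleton_iff]
    tauto
  · rw [hrange, SC.surround_eq_setOf]
    rfl
end

section
/- Let K be a simplicial complex on [m], let I, J ⊆ [m], and let α ∈ H̃^{p}(K_I), β ∈ H̃^{q}(K_J) be classes in the Hochster decomposition of H*(Z_K). If I ∩ J ≠ ∅, then the product αβ in H*(Z_K) is zero. -/
variable {V : Type}
section RAlgebra
variable [LinearOrder V]
attribute [local instance] Classical.propDecidable

end RAlgebra

/-- Let `α ∈ H̃^p(K_I)` and `β ∈ H̃^q(K_J)` be classes of the Hochster decomposition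
of `H^*(Z_K)`, represented by cocycles `x, y` of `R*(K)` of multidegrees `2I`, `2J`.
If `I ∩ J ≠ ∅`, then the product `αβ = 0` in `H^*(Z_K)`. -/
theorem stmt19 {V : Type} [LinearOrder V] (K : SC V) (I J : Finset V) (x y : RK K)
    (hx : dR K x = 0) (hy : dR K y = 0)
    (hxI : homogM K x I) (hyJ : homogM K y J)
    (hIJ : ¬ Disjoint I J) :
    ∃ z : RK K, mulR K x y = dR K z := by
  refine ⟨0, ?_⟩
  have h0 : dR K (0 : RK K) = 0 := by simp [dR]
  rw [h0]
  unfold mulR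
  rw [Finsupp.sum]; apply Finset.sum_eq_zero
  intro p hp
  rw [Finsupp.sum]; apply Finset.sum_eq_zero
  intro q hq
  have h1 := hxI p hp
  have h2 := hyJ q hq
  have : mulB K p.val q.val = 0 := by
    unfold mulB
    rw [h1, h2, if_neg hIJ]
  rw [this, smul_zero]
end
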